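/- arXiv:1701.00281 — 8 statements merged into one kernel-verified Lean document; each statement's English description precedes it below -/
import Mathlib

section
/- Let (X, μ) be a probability space on a countable set X with the discrete σ-algebra, let n ≥ 1 be an integer, and let ε > 0. If A ⊆ X^n satisfies μ^{⊗n}(A) ≥ 1/2, then μ^{⊗n}({ y ∈ X^n : ∃ x ∈ A, |{ j ∈ {1,…,n} : x_j ≠ y_j }| < ε·n }) ≥ 1 − 2·exp(−ε²·n). Equivalently, the mm-space (X^n, μ^{⊗n}, d_n), where d_n is the normalized Hamming distance, has concentration function α(ε) ≤ 2·exp(−ε²·n). -/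
/-!
For `c ≥ 1` and `K ≥ (c + 1)² / 4c`, the exponential moment of the Hamming distance to `A`
satisfies `μ(A) · ∫ c ^ d(·, A) ≤ Kⁿ` (Talagrand). Induct on `n`, splitting off one coordinate
`ω`: the distance from `(ω, z)` to `A` is at most the distance from `z` to the slice `A_ω`, and at
most one more than the distance from `z` to the projection `B` of `A`. So the inner integral is at
most `Kⁿ⁻¹ · min (1 / μ(A_ω), c / μ(B))`; bounding this `min` by a chord and averaging over `ω`
(AM-GM) produces the factor `(c + 1)² / 4c`. For `c = eᵗ` this factor is at most `e^{t²/4}`, and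
Markov's inequality with `t = 2ε` gives the theorem.
-/

open MeasureTheory ENNReal
open scoped NNReal

theorem hammingDist_insertNth {n : ℕ} {α : Fin (n + 1) → Type*} [∀ i, DecidableEq (α i)]
    (i : Fin (n + 1)) (a b : α i) (x y : ∀ j, α (i.succAbove j)) :
    hammingDist (i.insertNth a x) (i.insertNth b y) = hammingDist x y + if a = b then 0 else 1 := by
  simp only [hammingDist, Finset.card_filter, Fin.sum_univ_succAbove _ i,
    Fin.insertNth_apply_same, Fin.insertNth_apply_succAbove]
  simp [add_comm]

theorem Real.exp_add_one_sq_le (t : ℝ) : (exp t + 1) ^ 2 ≤ 4 * exp t * exp (t ^ 2 / 4) := by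
  have h : exp t + 1 = 2 * exp (t / 2) * cosh (t / 2) := by
    rw [cosh_eq, mul_comm 2, mul_assoc, mul_div_cancel₀ _ two_ne_zero, mul_add, ← exp_add,
      ← exp_add]
    norm_num
  have hcosh : cosh (t / 2) ^ 2 ≤ exp (t ^ 2 / 4) := by
    calc cosh (t / 2) ^ 2 ≤ exp ((t / 2) ^ 2 / 2) ^ 2 :=
          pow_le_pow_left₀ (cosh_pos _).le (cosh_le_exp_half_sq _) 2
      _ = exp (t ^ 2 / 4) := by rw [← exp_nat_mul]; ring_nf
  calc (exp t + 1) ^ 2 = 4 * exp (t / 2) ^ 2 * cosh (t / 2) ^ 2 := by rw [h]; ring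
    _ = 4 * exp t * cosh (t / 2) ^ 2 := by rw [← exp_nat_mul]; ring_nf
    _ ≤ 4 * exp t * exp (t ^ 2 / 4) := by gcongr

theorem lintegral_pi_eq_lintegral_insertNth {X : Type*} [MeasurableSpace X] {n : ℕ}
    (μ : Fin (n + 1) → Measure X) [∀ i, SigmaFinite (μ i)] (i : Fin (n + 1))
    {f : (Fin (n + 1) → X) → ℝ≥0∞} (hf : Measurable f) :
    ∫⁻ y, f y ∂Measure.pi μ =
      ∫⁻ ω, ∫⁻ z, f (i.insertNth ω z) ∂Measure.pi (fun j => μ (i.succAbove j)) ∂μ i := by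
  rw [← (measurePreserving_piFinSuccAbove μ i).symm.lintegral_comp hf]
  exact lintegral_prod _ (hf.comp (MeasurableEquiv.measurable _)).aemeasurable

theorem measure_pi_eq_lintegral_insertNth {X : Type*} [MeasurableSpace X] {n : ℕ}
    (μ : Fin (n + 1) → Measure X) [∀ i, SigmaFinite (μ i)] (i : Fin (n + 1))
    {s : Set (Fin (n + 1) → X)} (hs : MeasurableSet s) :
    Measure.pi μ s =
      ∫⁻ ω, Measure.pi (fun j => μ (i.succAbove j)) {z | i.insertNth ω z ∈ s} ∂μ i := by
  rw [← (measurePreserving_piFinSuccAbove μ i).symm.measure_preimage hs.nullMeasurableSet]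
  exact Measure.prod_apply (hs.preimage (MeasurableEquiv.measurable _))

/-- The hypotheses say `b I / C ≤ min (1 / r) c` for `r = a / b ∈ [0, 1]`, and there
`min (1 / r) c ≤ 1 + c - c r` since this line meets `1 / r` at `r = 1 / c` and `r = 1`. -/
theorem sq_mul_add_le_of_le_min {a b c C I : ℝ≥0∞} (hb : b ≠ ⊤) (hc : c ≠ ⊤) (hC : C ≠ ⊤)
    (hab : a ≤ b) (haI : a * I ≤ C) (hbI : b * I ≤ c * C) :
    b ^ 2 * I + c * C * a ≤ (c + 1) * C * b := by
  rcases eq_or_ne b 0 with rfl | hb0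
  · simp [nonpos_iff_eq_zero.1 hab]
  have hI : I ≠ ⊤ := by
    rintro rfl
    exact mul_ne_top hc hC (top_le_iff.1 (mul_top hb0 ▸ hbI))
  lift a to ℝ≥0 using ne_top_of_le_ne_top hb hab
  lift b to ℝ≥0 using hb
  lift c to ℝ≥0 using hc
  lift C to ℝ≥0 using hC
  lift I to ℝ≥0 using hI
  norm_cast at hab haI hbI hb0 ⊢
  rw [← NNReal.coe_le_coe] at hab haI hbI ⊢
  push_cast at hab haI hbI ⊢
  have hb0 : (0 : ℝ) < b := by positivity
  have ha0 : (0 : ℝ) ≤ a := a.2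
  have hC0 : (0 : ℝ) ≤ C := C.2
  rcases le_or_gt (b : ℝ) (a * c) with hbac | hacb
  · have ha : (0 : ℝ) < a := by nlinarith
    have h1 : (b : ℝ) ^ 2 * (a * I) ≤ b ^ 2 * C := by gcongr
    have h2 : 0 ≤ (C : ℝ) * ((b - a) * (a * c - b)) :=
      mul_nonneg hC0 (mul_nonneg (by linarith) (by linarith))
    refine le_of_mul_le_mul_left ?_ ha
    linear_combination h1 + h2
  · have h1 : (b : ℝ) * (b * I) ≤ b * (c * C) := by gcongr
    linear_combination h1 + mul_le_mul_of_nonneg_left hacb.le hC0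

/-- AM-GM in the form `u (1 + c - c u) ≤ (c + 1)² / 4c`, with `u = a / b`. -/
theorem mul_le_of_sq_mul_add_le {a b c C K T : ℝ≥0∞} (hb : b ≠ ⊤) (hc : c ≠ ⊤) (hC : C ≠ ⊤)
    (hK : K ≠ ⊤) (hab : a ≤ b) (hcK : (c + 1) ^ 2 ≤ 4 * c * K)
    (h : b ^ 2 * T + c * C * a ≤ (c + 1) * C * b) :
    a * T ≤ C * K := by
  rcases eq_or_ne b 0 with rfl | hb0
  · simp [nonpos_iff_eq_zero.1 hab]
  have hT : T ≠ ⊤ := by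
    rintro rfl
    refine mul_ne_top (mul_ne_top (add_ne_top.2 ⟨hc, one_ne_top⟩) hC) hb (top_le_iff.1 ?_)
    simpa [mul_top (pow_ne_zero 2 hb0)] using h
  lift a to ℝ≥0 using ne_top_of_le_ne_top hb hab
  lift b to ℝ≥0 using hb
  lift c to ℝ≥0 using hc
  lift C to ℝ≥0 using hC
  lift K to ℝ≥0 using hK
  lift T to ℝ≥0 using hT
  norm_cast at hab hcK h hb0 ⊢
  rw [← NNReal.coe_le_coe] at hab hcK h ⊢
  push_cast at hab hcK h ⊢
  have hb0 : (0 : ℝ) < b := by positivity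
  have ha0 : (0 : ℝ) ≤ a := a.2
  have hc0 : (0 : ℝ) < c := by
    by_contra! hc0
    nlinarith [(K.2 : (0 : ℝ) ≤ K)]
  have hC0 : (0 : ℝ) ≤ C := C.2
  have h1 := mul_le_mul_of_nonneg_left h (mul_nonneg (by positivity : (0 : ℝ) ≤ 4 * c) ha0)
  have hsq : 0 ≤ (C : ℝ) * (b * (c + 1) - 2 * c * a) ^ 2 := by positivity
  have hk2 : (C : ℝ) * b ^ 2 * (c + 1) ^ 2 ≤ C * b ^ 2 * (4 * c * K) := by gcongr
  refine le_of_mul_le_mul_left ?_ (by positivity : (0 : ℝ) < 4 * c * b ^ 2)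
  linear_combination h1 + hsq + hk2

theorem lintegral_mul_lintegral_le_of_le_min {Ω : Type*} [MeasurableSpace Ω] (ν : Measure Ω)
    [IsProbabilityMeasure ν] {a I : Ω → ℝ≥0∞} {b c C K : ℝ≥0∞} (hb : b ≠ ⊤) (hc : c ≠ ⊤)
    (hC : C ≠ ⊤) (hK : K ≠ ⊤) (hcK : (c + 1) ^ 2 ≤ 4 * c * K) (hab : ∀ ω, a ω ≤ b)
    (haI : ∀ ω, a ω * I ω ≤ C) (hbI : ∀ ω, b * I ω ≤ c * C) :
    (∫⁻ ω, a ω ∂ν) * ∫⁻ ω, I ω ∂ν ≤ C * K := by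
  refine mul_le_of_sq_mul_add_le hb hc hC hK ?_ hcK ?_
  · calc ∫⁻ ω, a ω ∂ν ≤ ∫⁻ _, b ∂ν := lintegral_mono hab
      _ = b := by simp
  · calc b ^ 2 * ∫⁻ ω, I ω ∂ν + c * C * ∫⁻ ω, a ω ∂ν
        = ∫⁻ ω, b ^ 2 * I ω ∂ν + ∫⁻ ω, c * C * a ω ∂ν := by
          rw [lintegral_const_mul' _ _ (pow_ne_top hb), lintegral_const_mul' _ _ (mul_ne_top hc hC)]
      _ ≤ ∫⁻ ω, (b ^ 2 * I ω + c * C * a ω) ∂ν := le_lintegral_add _ _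
      _ ≤ ∫⁻ _, (c + 1) * C * b ∂ν :=
          lintegral_mono fun ω => sq_mul_add_le_of_le_min hb hc hC (hab ω) (haI ω) (hbI ω)
      _ = (c + 1) * C * b := by simp

section

variable {X : Type*} [DecidableEq X]

noncomputable def infPowHammingDist (c : ℝ≥0∞) {n : ℕ} (A : Set (Fin n → X)) (y : Fin n → X) :
    ℝ≥0∞ :=
  ⨅ x ∈ A, c ^ hammingDist x y

theorem infPowHammingDist_insertNth_le_slice (c : ℝ≥0∞) {n : ℕ} (A : Set (Fin (n + 1) → X))
    (i : Fin (n + 1)) (ω : X) (z : Fin n → X) :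
    infPowHammingDist c A (i.insertNth ω z) ≤ infPowHammingDist c {x | i.insertNth ω x ∈ A} z :=
  le_iInf₂ fun x hx => iInf₂_le_of_le (i.insertNth ω x) hx (by simp [hammingDist_insertNth])

theorem infPowHammingDist_insertNth_le_mul_shadow {c : ℝ≥0∞} (hc1 : 1 ≤ c) (hc : c ≠ ⊤) {n : ℕ}
    (A : Set (Fin (n + 1) → X)) (i : Fin (n + 1)) (ω : X) (z : Fin n → X) :
    infPowHammingDist c A (i.insertNth ω z) ≤
      c * infPowHammingDist c {x | ∃ ω', i.insertNth ω' x ∈ A} z := by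
  simp_rw [infPowHammingDist, mul_iInf_of_ne (zero_lt_one.trans_le hc1).ne' hc]
  refine le_iInf₂ fun x ⟨ω', hx⟩ => iInf₂_le_of_le (i.insertNth ω' x) hx ?_
  rw [hammingDist_insertNth, ← pow_succ']
  exact pow_le_pow_right₀ hc1 (by split_ifs <;> simp)

theorem measure_pi_mul_lintegral_infPowHammingDist_le [Countable X] [MeasurableSpace X]
    [MeasurableSingletonClass X] {c K : ℝ≥0∞} (hc1 : 1 ≤ c) (hc : c ≠ ⊤) (hK : K ≠ ⊤)
    (hcK : (c + 1) ^ 2 ≤ 4 * c * K) {n : ℕ} (μ : Fin n → Measure X)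
    [∀ i, IsProbabilityMeasure (μ i)] (A : Set (Fin n → X)) :
    Measure.pi μ A * ∫⁻ y, infPowHammingDist c A y ∂Measure.pi μ ≤ K ^ n := by
  induction n with
  | zero =>
    rcases A.eq_empty_or_nonempty with rfl | ⟨x, hx⟩
    · simp
    have hF : ∀ y, infPowHammingDist c A y ≤ 1 := fun y =>
      iInf₂_le_of_le x hx (by simp [hammingDist_eq_zero.2 (Subsingleton.elim x y)])
    calc Measure.pi μ A * ∫⁻ y, infPowHammingDist c A y ∂Measure.pi μ
        ≤ 1 * ∫⁻ _, 1 ∂Measure.pi μ := by gcongr; exacts [prob_le_one, hF _]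
      _ = K ^ 0 := by simp
  | succ n ih =>
    set ν := Measure.pi fun j => μ ((0 : Fin (n + 1)).succAbove j)
    set B := {x | ∃ ω', (0 : Fin (n + 1)).insertNth ω' x ∈ A}
    rw [measure_pi_eq_lintegral_insertNth μ 0 .of_discrete,
      lintegral_pi_eq_lintegral_insertNth μ 0 .of_discrete, pow_succ]
    refine lintegral_mul_lintegral_le_of_le_min (μ 0) (b := ν B) (measure_ne_top _ _) hc
      (pow_ne_top hK) hK hcK (fun ω => measure_mono fun x hx => ⟨ω, hx⟩) (fun ω => ?_)
      (fun ω => ?_)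
    · calc _ ≤ ν {x | (0 : Fin (n + 1)).insertNth ω x ∈ A} *
            ∫⁻ z, infPowHammingDist c {x | (0 : Fin (n + 1)).insertNth ω x ∈ A} z ∂ν := by
            gcongr with z; exact infPowHammingDist_insertNth_le_slice c A 0 ω z
        _ ≤ K ^ n := ih _ _
    · calc _ ≤ ν B * ∫⁻ z, c * infPowHammingDist c B z ∂ν := by
            gcongr with z; exact infPowHammingDist_insertNth_le_mul_shadow hc1 hc A 0 ω z
        _ = c * (ν B * ∫⁻ z, infPowHammingDist c B z ∂ν) := by
            rw [lintegral_const_mul' _ _ hc]; ring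
        _ ≤ c * K ^ n := by gcongr; exact ih _ _

theorem measureReal_pi_mul_measureReal_pi_far_le [Countable X] [MeasurableSpace X]
    [MeasurableSingletonClass X] {n : ℕ} (μ : Fin n → Measure X) [∀ i, IsProbabilityMeasure (μ i)]
    (A : Set (Fin n → X)) {t : ℝ} (ht : 0 ≤ t) (r : ℝ) :
    (Measure.pi μ).real A * (Measure.pi μ).real {y | ∀ x ∈ A, r ≤ hammingDist x y} ≤
      Real.exp (n * t ^ 2 / 4 - t * r) := by
  set P := Measure.pi μ
  set far := {y | ∀ x ∈ A, r ≤ hammingDist x y}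
  set F := infPowHammingDist (ENNReal.ofReal (Real.exp t)) A
  have hcK : (ENNReal.ofReal (Real.exp t) + 1) ^ 2 ≤
      4 * ENNReal.ofReal (Real.exp t) * ENNReal.ofReal (Real.exp (t ^ 2 / 4)) := by
    have := ofReal_le_ofReal (Real.exp_add_one_sq_le t)
    rwa [ofReal_pow (by positivity), ofReal_add (Real.exp_nonneg _) zero_le_one, ofReal_one,
      ofReal_mul (by positivity), ofReal_mul (by norm_num), ofReal_ofNat] at this
  have hmoment := measure_pi_mul_lintegral_infPowHammingDist_le
    (one_le_ofReal.2 (Real.one_le_exp ht)) ofReal_ne_top ofReal_ne_top hcK μ A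
  have hfar : far ⊆ {y | ENNReal.ofReal (Real.exp (t * r)) ≤ F y} := by
    intro y hy
    show _ ≤ ⨅ x ∈ A, ENNReal.ofReal (Real.exp t) ^ hammingDist x y
    refine le_iInf₂ fun x hx => ?_
    rw [← ofReal_pow (Real.exp_nonneg _), ← Real.exp_nat_mul]
    exact ofReal_le_ofReal (Real.exp_le_exp.2 (by nlinarith [hy x hx]))
  have hMarkov : ENNReal.ofReal (Real.exp (t * r)) * P far ≤ ∫⁻ y, F y ∂P :=
    (mul_le_mul_right (measure_mono hfar) _).trans (mul_meas_ge_le_lintegral .of_discrete _)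
  have hmoment_far : ENNReal.ofReal (Real.exp (t * r)) * (P A * P far) ≤
      ENNReal.ofReal (Real.exp (n * t ^ 2 / 4)) :=
    calc ENNReal.ofReal (Real.exp (t * r)) * (P A * P far)
        = P A * (ENNReal.ofReal (Real.exp (t * r)) * P far) := by ring
      _ ≤ P A * ∫⁻ y, F y ∂P := by gcongr
      _ ≤ ENNReal.ofReal (Real.exp (t ^ 2 / 4)) ^ n := hmoment
      _ = ENNReal.ofReal (Real.exp (n * t ^ 2 / 4)) := by
        rw [← ofReal_pow (Real.exp_nonneg _), ← Real.exp_nat_mul, mul_div_assoc]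
  have := toReal_mono ofReal_ne_top hmoment_far
  rw [toReal_mul, toReal_mul, toReal_ofReal (Real.exp_nonneg _),
    toReal_ofReal (Real.exp_nonneg _)] at this
  rw [Real.exp_sub, le_div_iff₀ (Real.exp_pos _)]
  simpa only [measureReal_def, mul_comm] using this

end

theorem hamming_concentration_general {X : Type*} [Countable X] [DecidableEq X]
    [m : MeasurableSpace X] (hm : m = ⊤)
    (μ : Measure X) [IsProbabilityMeasure μ]
    (n : ℕ) (ε : ℝ) (hε : 0 < ε)
    (A : Set (Fin n → X))
    (hA : 1 / 2 ≤ ((Measure.pi fun _ : Fin n => μ) A).toReal) :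
    1 - 2 * Real.exp (-ε ^ 2 * n) ≤
      ((Measure.pi fun _ : Fin n => μ)
        { y : Fin n → X | ∃ x ∈ A,
          ((Finset.univ.filter fun j : Fin n => x j ≠ y j).card : ℝ) < ε * n }).toReal := by
  have : DiscreteMeasurableSpace X := by subst hm; infer_instance
  set P := Measure.pi fun _ : Fin n => μ
  set N := { y : Fin n → X | ∃ x ∈ A,
    ((Finset.univ.filter fun j : Fin n => x j ≠ y j).card : ℝ) < ε * n }
  have hNc : Nᶜ = {y | ∀ x ∈ A, ε * n ≤ hammingDist x y} := by
    ext y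
    simp [N, hammingDist]
  have hfar := measureReal_pi_mul_measureReal_pi_far_le (fun _ => μ) A
    (by positivity : 0 ≤ 2 * ε) (ε * n)
  rw [← hNc, show (n : ℝ) * (2 * ε) ^ 2 / 4 - 2 * ε * (ε * n) = -ε ^ 2 * n by ring] at hfar
  have hcompl : P.real Nᶜ = 1 - P.real N := probReal_compl_eq_one_sub .of_discrete
  rw [← measureReal_def] at hA ⊢
  nlinarith [measureReal_nonneg (μ := P) (s := Nᶜ)]

/-- Concentration of measure in product spaces with the normalized Hamming distance:
if `A ⊆ Xⁿ` has `μ^{⊗n}(A) ≥ 1/2`, then the (open) `ε`-neighborhood of `A` in the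
normalized Hamming distance has measure at least `1 - 2·exp(-ε²·n)`. -/
theorem hamming_concentration {X : Type*} [Countable X] [DecidableEq X]
    [m : MeasurableSpace X] (hm : m = ⊤)
    (μ : Measure X) [IsProbabilityMeasure μ]
    (n : ℕ) (hn : 1 ≤ n) (ε : ℝ) (hε : 0 < ε)
    (A : Set (Fin n → X))
    (hA : 1 / 2 ≤ ((Measure.pi fun _ : Fin n => μ) A).toReal) :
    1 - 2 * Real.exp (-ε ^ 2 * n) ≤
      ((Measure.pi fun _ : Fin n => μ)
        { y : Fin n → X | ∃ x ∈ A,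
          ((Finset.univ.filter fun j : Fin n => x j ≠ y j).card : ℝ) < ε * n }).toReal :=
  hamming_concentration_general (m := m) hm μ n ε hε A hA
end

section
/- Let (X_i, d_i, μ_i)_{i ∈ I} be a Lévy family of mm-spaces, let Y be a uniform space equipped with its Borel σ-algebra, and let f_i : X_i → Y be Borel measurable maps for each i ∈ I. If the family (f_i)_{i ∈ I} is uniformly equicontinuous, i.e., for every entourage U of Y there exists ε > 0 such that for all i ∈ I and all x, y ∈ X_i, d_i(x, y) ≤ ε implies (f_i(x), f_i(y)) ∈ U, then the net ((f_i)_*(μ_i))_{i ∈ I} of push-forward measures concentrates in Y. -/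
/-!
Pull the set `B i` back to `A i = f i ⁻¹' B i`, which has the same measure. By uniform
equicontinuity, an `ε` matched to the entourage `U` maps the `ε`-thickening of `A i` into the
`U`-neighbourhood of `B i`; the Lévy property sends the measure of that thickening to `1`, and a
squeeze against the trivial bound `1` finishes.
-/

open Filter MeasureTheory Topology

lemma Metric.thickening_preimage_subset_preimage_entourage {α β : Type*} [PseudoMetricSpace α]
    {f : α → β} {U : Set (β × β)} {ε : ℝ} (hfU : ∀ x y, dist x y ≤ ε → (f x, f y) ∈ U)
    (B : Set β) :
    thickening ε (f ⁻¹' B) ⊆ f ⁻¹' {y | ∃ x ∈ B, (x, y) ∈ U} := by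
  intro x' hx'
  obtain ⟨x, hxB, hdist⟩ := mem_thickening_iff.1 hx'
  exact ⟨f x, hxB, hfU x x' (dist_comm x x' ▸ hdist.le)⟩

lemma MeasureTheory.tendsto_map_toReal_one_of_subset_preimage {ι : Type*} {l : Filter ι}
    {α β : ι → Type*} [∀ i, MeasurableSpace (α i)] [∀ i, MeasurableSpace (β i)]
    {μ : ∀ i, Measure (α i)} [∀ i, IsProbabilityMeasure (μ i)] {f : ∀ i, α i → β i}
    (hf : ∀ i, AEMeasurable (f i) (μ i)) {s : ∀ i, Set (α i)} {t : ∀ i, Set (β i)}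
    (hst : ∀ i, s i ⊆ f i ⁻¹' t i) (hs : Tendsto (fun i => (μ i (s i)).toReal) l (𝓝 1)) :
    Tendsto (fun i => ((μ i).map (f i) (t i)).toReal) l (𝓝 1) := by
  refine tendsto_of_tendsto_of_tendsto_of_le_of_le hs tendsto_const_nhds (fun i => ?_) fun i => ?_
  · have := Measure.isProbabilityMeasure_map (hf i)
    exact ENNReal.toReal_mono (measure_ne_top _ _)
      ((measure_mono (hst i)).trans (Measure.le_map_apply (hf i) _))
  · have := Measure.isProbabilityMeasure_map (hf i)
    exact measureReal_le_one

theorem pushforward_levy_concentrates_general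
    {I : Type*} [Preorder I]
    (X : I → Type*) [∀ i, MetricSpace (X i)] [∀ i, MeasurableSpace (X i)]
    (μ : ∀ i, Measure (X i)) [∀ i, IsProbabilityMeasure (μ i)]
    (hLevy : ∀ A : ∀ i, Set (X i), (∀ i, MeasurableSet (A i)) →
      0 < liminf (fun i => ((μ i) (A i)).toReal) atTop →
      ∀ ε : ℝ, 0 < ε →
        Tendsto (fun i => ((μ i) (Metric.thickening ε (A i))).toReal) atTop (𝓝 1))
    {Y : Type*} [UniformSpace Y] [MeasurableSpace Y]
    (f : ∀ i, X i → Y) (hf : ∀ i, Measurable (f i))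
    (heq : ∀ U ∈ uniformity Y, ∃ ε : ℝ, 0 < ε ∧ ∀ i, ∀ x y : X i,
      dist x y ≤ ε → (f i x, f i y) ∈ U) :
    ∀ B : ∀ i, Set Y, (∀ i, MeasurableSet (B i)) →
      0 < liminf (fun i => ((μ i).map (f i) (B i)).toReal) atTop →
      ∀ U ∈ uniformity Y, IsOpen U →
        Tendsto (fun i => ((μ i).map (f i) {y : Y | ∃ x ∈ B i, (x, y) ∈ U}).toReal)
          atTop (𝓝 1) := by
  intro B hB hpos U hU _
  obtain ⟨ε, hε, hεU⟩ := heq U hU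
  have hpreimage_pos : 0 < liminf (fun i => (μ i (f i ⁻¹' B i)).toReal) atTop := by
    simpa only [Measure.map_apply (hf _) (hB _)] using hpos
  exact tendsto_map_toReal_one_of_subset_preimage (fun i => (hf i).aemeasurable)
    (fun i => Metric.thickening_preimage_subset_preimage_entourage (hεU i) (B i))
    (hLevy _ (fun i => hf i (hB i)) hpreimage_pos ε hε)

/-- Push-forwards of a Lévy family of mm-spaces under a uniformly equicontinuous
family of Borel maps into a uniform space `Y` concentrate in `Y`. -/
theorem pushforward_levy_concentrates
    {I : Type*} [Preorder I] [IsDirected I (· ≤ ·)] [Nonempty I]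
    (X : I → Type*) [∀ i, MetricSpace (X i)] [∀ i, MeasurableSpace (X i)]
    [∀ i, BorelSpace (X i)]
    (μ : ∀ i, Measure (X i)) [∀ i, IsProbabilityMeasure (μ i)]
    (hLevy : ∀ A : ∀ i, Set (X i), (∀ i, MeasurableSet (A i)) →
      0 < liminf (fun i => ((μ i) (A i)).toReal) atTop →
      ∀ ε : ℝ, 0 < ε →
        Tendsto (fun i => ((μ i) (Metric.thickening ε (A i))).toReal) atTop (𝓝 1))
    {Y : Type*} [UniformSpace Y] [MeasurableSpace Y] [BorelSpace Y]
    (f : ∀ i, X i → Y) (hf : ∀ i, Measurable (f i))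
    (heq : ∀ U ∈ uniformity Y, ∃ ε : ℝ, 0 < ε ∧ ∀ i, ∀ x y : X i,
      dist x y ≤ ε → (f i x, f i y) ∈ U) :
    ∀ B : ∀ i, Set Y, (∀ i, MeasurableSet (B i)) →
      0 < liminf (fun i => ((μ i).map (f i) (B i)).toReal) atTop →
      ∀ U ∈ uniformity Y, IsOpen U →
        Tendsto (fun i => ((μ i).map (f i) {y : Y | ∃ x ∈ B i, (x, y) ∈ U}).toReal)
          atTop (𝓝 1) :=
  pushforward_levy_concentrates_general X μ hLevy f hf heq
end

section
/- Let X be a uniform space equipped with its Borel σ-algebra, let (μ_i)_{i ∈ I} be a net of Borel probability measures on X that concentrates in X, and let H be a UEB set of bounded uniformly continuous real-valued functions on X. For each pair (i, f) ∈ I × H, let m_i(f) be a median of f with respect to μ_i. Then for every ε > 0 one has lim_{i ∈ I} sup_{f ∈ H} μ_i({ x ∈ X : |f(x) − m_i(f)| > ε }) = 0. -/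
/-!
Choose, for each `i`, a function `F i ∈ H` that nearly realises the supremum; it then suffices
to show that the deviation of `F i` from its median tends to `0` in measure. The sublevel and
superlevel sets of `F i` at its median both have measure at least `1/2`, so by concentration their
`V`-neighbourhoods have measure tending to `1`, where `V` is an open entourage on which every
`f ∈ H` oscillates by at most `ε`. A point deviating from the median by more than `ε` lies outside
one of these two neighbourhoods.
-/

open Filter MeasureTheory Topology

/-- A net of Borel probability measures on a uniform space concentrates if sets with
liminf-positive measure have `U`-neighborhoods of measure tending to `1`, for every
open entourage `U`. -/
def ConcentratesIn {I : Type*} [Preorder I] {X : Type*} [UniformSpace X]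
    [MeasurableSpace X] (μ : I → Measure X) : Prop :=
  ∀ A : I → Set X, (∀ i, MeasurableSet (A i)) →
    0 < liminf (fun i => (μ i (A i)).toReal) atTop →
    ∀ U ∈ uniformity X, IsOpen U →
      Tendsto (fun i => (μ i {y : X | ∃ x ∈ A i, (x, y) ∈ U}).toReal) atTop (𝓝 1)

/-- A set of bounded uniformly continuous real-valued functions is UEB if it is
uniformly equicontinuous and bounded in the supremum norm. -/
def IsUEB {X : Type*} [UniformSpace X] (H : Set (X → ℝ)) : Prop :=
  (∀ f ∈ H, UniformContinuous f) ∧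
  (∃ C : ℝ, ∀ f ∈ H, ∀ x, |f x| ≤ C) ∧
  (∀ ε : ℝ, 0 < ε → ∃ U ∈ uniformity X, ∀ f ∈ H, ∀ x y : X, (x, y) ∈ U → |f x - f y| ≤ ε)

lemma tendsto_biSup_nhds_zero_of_forall_tendsto {I α : Type*} {l : Filter I} {H : Set α}
    {v : I → α → ℝ} (hv : ∀ i f, 0 ≤ v i f)
    (h : ∀ F : I → α, (∀ i, F i ∈ H) → Tendsto (fun i => v i (F i)) l (𝓝 0)) :
    Tendsto (fun i => ⨆ f ∈ H, v i f) l (𝓝 0) := by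
  rcases Set.eq_empty_or_nonempty H with rfl | ⟨f₀, hf₀⟩
  · simpa using tendsto_const_nhds
  have hs : ∀ i, 0 ≤ ⨆ f ∈ H, v i f := fun i =>
    Real.iSup_nonneg fun f => Real.iSup_nonneg fun _ => hv i f
  rw [Metric.tendsto_nhds]
  intro δ hδ
  have hnear : ∀ i, ∃ f ∈ H, ⨆ f ∈ H, v i f ≤ v i f + δ / 2 := by
    intro i
    -- `Real.iSup_le` needs a nonnegative bound: an empty or unbounded real supremum is `0`.
    rcases le_or_gt (⨆ f ∈ H, v i f) (δ / 2) with hsmall | hlarge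
    · exact ⟨f₀, hf₀, hsmall.trans (by linarith [hv i f₀])⟩
    · by_contra! hfar
      have : ⨆ f ∈ H, v i f ≤ (⨆ f ∈ H, v i f) - δ / 2 :=
        Real.iSup_le (fun f => Real.iSup_le (fun hf => by linarith [hfar f hf]) (by linarith))
          (by linarith)
      linarith
  choose F hFH hF using hnear
  filter_upwards [(Metric.tendsto_nhds.1 (h F hFH)) (δ / 2) (by linarith)] with i hi
  rw [Real.dist_0_eq_abs, abs_of_nonneg (hv i _)] at hi
  rw [Real.dist_0_eq_abs, abs_of_nonneg (hs i)]
  linarith [hF i]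

lemma liminf_measureReal_pos {I X : Type*} [MeasurableSpace X] {l : Filter I} [l.NeBot]
    {μ : I → Measure X} [∀ i, IsProbabilityMeasure (μ i)] {A : I → Set X} {c : ℝ} (hc : 0 < c)
    (hA : ∀ i, c ≤ (μ i).real (A i)) :
    0 < liminf (fun i => (μ i).real (A i)) l := by
  have hbdd : IsBoundedUnder (· ≤ ·) l fun i => (μ i).real (A i) :=
    ⟨1, eventually_map.2 (Eventually.of_forall fun _ => measureReal_le_one)⟩
  exact hc.trans_le (le_liminf_of_le hbdd.isCoboundedUnder_ge (Eventually.of_forall hA))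

lemma ConcentratesIn.tendsto_measureReal_compl_image {I X : Type*} [Preorder I]
    [IsDirected I (· ≤ ·)] [Nonempty I] [UniformSpace X] [MeasurableSpace X]
    [OpensMeasurableSpace X] {μ : I → Measure X} [∀ i, IsProbabilityMeasure (μ i)]
    (hμ : ConcentratesIn μ) {A : I → Set X} (hA : ∀ i, MeasurableSet (A i)) {c : ℝ} (hc : 0 < c)
    (hAc : ∀ i, c ≤ (μ i).real (A i)) {U : SetRel X X} (hU : U ∈ uniformity X) (hUo : IsOpen U) :
    Tendsto (fun i => (μ i).real (U.image (A i))ᶜ) atTop (𝓝 0) := by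
  have h : Tendsto (fun i => (μ i).real (U.image (A i))) atTop (𝓝 1) :=
    hμ A hA (liminf_measureReal_pos hc hAc) U hU hUo
  simp_rw [probReal_compl_eq_one_sub hUo.relImage.measurableSet]
  simpa using (tendsto_const_nhds (x := (1 : ℝ))).sub h

lemma setOf_lt_abs_sub_subset_union_compl_image {X : Type*} {f : X → ℝ} {U : SetRel X X}
    {ε : ℝ} (hU : ∀ x y, (x, y) ∈ U → |f x - f y| ≤ ε) (a : ℝ) :
    {x | ε < |f x - a|} ⊆ (U.image {x | f x ≤ a})ᶜ ∪ (U.image {x | a ≤ f x})ᶜ := by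
  intro x (hx : ε < |f x - a|)
  rcases lt_abs.1 hx with h | h
  · left
    rintro ⟨z, hz, hzx⟩
    linarith [(abs_le.1 (hU z x hzx)).1, show f z ≤ a from hz]
  · right
    rintro ⟨z, hz, hzx⟩
    linarith [(abs_le.1 (hU z x hzx)).2, show a ≤ f z from hz]

/-- If a net of Borel probability measures concentrates in a uniform space `X` and
`H` is UEB, then the measures of the sets where `f ∈ H` deviates from its median
by more than `ε` tend to zero, uniformly in `f ∈ H`. -/
theorem concentration_median
    {I : Type*} [Preorder I] [IsDirected I (· ≤ ·)] [Nonempty I]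
    {X : Type*} [UniformSpace X] [MeasurableSpace X] [BorelSpace X]
    (μ : I → Measure X) [∀ i, IsProbabilityMeasure (μ i)]
    (hconc : ConcentratesIn μ)
    (H : Set (X → ℝ)) (hH : IsUEB H)
    (m : I → (X → ℝ) → ℝ)
    (hm : ∀ i, ∀ f ∈ H, 1 / 2 ≤ (μ i {x | m i f ≤ f x}).toReal ∧
      1 / 2 ≤ (μ i {x | f x ≤ m i f}).toReal)
    (ε : ℝ) (hε : 0 < ε) :
    Tendsto (fun i => ⨆ f ∈ H, (μ i {x | ε < |f x - m i f|}).toReal) atTop (𝓝 0) := by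
  obtain ⟨hcont, -, hequi⟩ := hH
  obtain ⟨U, hU, hUε⟩ := hequi ε hε
  obtain ⟨V, ⟨hV, hVo⟩, hVU⟩ := uniformity_hasBasis_open.mem_iff.1 hU
  refine tendsto_biSup_nhds_zero_of_forall_tendsto (fun _ _ => ENNReal.toReal_nonneg)
    fun F hF => ?_
  have hmeas : ∀ i, Measurable (F i) := fun i => (hcont _ (hF i)).continuous.measurable
  have hbelow := hconc.tendsto_measureReal_compl_image
    (fun i => measurableSet_le (hmeas i) measurable_const) one_half_pos
    (fun i => (hm i _ (hF i)).2) hV hVo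
  have habove := hconc.tendsto_measureReal_compl_image
    (fun i => measurableSet_le measurable_const (hmeas i)) one_half_pos
    (fun i => (hm i _ (hF i)).1) hV hVo
  refine squeeze_zero (fun _ => ENNReal.toReal_nonneg) (fun i => ?_)
    (by simpa using hbelow.add habove)
  calc (μ i {x | ε < |F i x - m i (F i)|}).toReal
      ≤ (μ i).real ((V.image {x | F i x ≤ m i (F i)})ᶜ ∪ (V.image {x | m i (F i) ≤ F i x})ᶜ) :=
        measureReal_mono (setOf_lt_abs_sub_subset_union_compl_image
          (fun x y hxy => hUε _ (hF i) x y (hVU hxy)) _)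
    _ ≤ _ := measureReal_union_le _ _
end

section
/- Let X be a uniform space equipped with its Borel σ-algebra, let (μ_i)_{i ∈ I} be a net of Borel probability measures on X that concentrates in X, and let H be a UEB set of bounded uniformly continuous real-valued functions on X. For each pair (i, f) ∈ I × H, let m_i(f) be a median of f with respect to μ_i. Then lim_{i ∈ I} sup_{f ∈ H} |∫ f dμ_i − m_i(f)| = 0. -/
open Filter MeasureTheory Topology

/-!
Fix `ε > 0`, an entourage `U` on which every `f ∈ H` oscillates by at most `ε / 2`, and any
choice of `fᵢ ∈ H`. The sets `{fᵢ ≤ mᵢ(fᵢ)}` have measure at least `1 / 2`, so by concentration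
their `U`-neighbourhoods have measure tending to `1`; on these neighbourhoods
`fᵢ ≤ mᵢ(fᵢ) + ε / 2`, while everywhere `fᵢ - mᵢ(fᵢ)` is bounded by twice the uniform bound
of `H`. Hence `∫ fᵢ dμᵢ ≤ mᵢ(fᵢ) + ε` eventually, and symmetrically with `-fᵢ`. As the choice
of `fᵢ` was arbitrary, the bound holds eventually uniformly in `f ∈ H`.
-/

theorem Filter.eventually_forall_mem_of_forall_selection {ι α : Type*} {l : Filter ι}
    {s : Set α} {p : ι → α → Prop}
    (h : ∀ F : ι → α, (∀ i, F i ∈ s) → ∀ᶠ i in l, p i (F i)) :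
    ∀ᶠ i in l, ∀ a ∈ s, p i a := by
  classical
  rcases s.eq_empty_or_nonempty with rfl | ⟨a₀, ha₀⟩
  · simp
  let F : ι → α := fun i => if hi : ∃ a ∈ s, ¬ p i a then hi.choose else a₀
  have hF : ∀ i, F i ∈ s := fun i => by
    by_cases hi : ∃ a ∈ s, ¬ p i a
    · simpa only [F, dif_pos hi] using hi.choose_spec.1
    · simpa only [F, dif_neg hi] using ha₀
  filter_upwards [h F hF] with i hpF a ha
  by_contra hpa
  have hi : ∃ a ∈ s, ¬ p i a := ⟨a, ha, hpa⟩
  simp only [F, dif_pos hi] at hpF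
  exact hi.choose_spec.2 hpF

theorem tendsto_biSup_abs_nhds_zero {ι α : Type*} {l : Filter ι} {s : Set α} {u : ι → α → ℝ}
    (h : ∀ ε > 0, ∀ᶠ i in l, ∀ a ∈ s, |u i a| ≤ ε) :
    Tendsto (fun i => ⨆ a ∈ s, |u i a|) l (𝓝 0) := by
  rw [Metric.tendsto_nhds]
  intro ε hε
  filter_upwards [h (ε / 2) (half_pos hε)] with i hi
  have hnonneg : 0 ≤ ⨆ a ∈ s, |u i a| :=
    Real.iSup_nonneg fun a => Real.iSup_nonneg fun _ => abs_nonneg _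
  have hle : ⨆ a ∈ s, |u i a| ≤ ε / 2 :=
    Real.iSup_le (fun a => Real.iSup_le (hi a) (half_pos hε).le) (half_pos hε).le
  rw [Real.dist_eq, sub_zero, abs_of_nonneg hnonneg]
  linarith

theorem integral_le_of_le_on_of_le_on_compl {Ω : Type*} [MeasurableSpace Ω] {ν : Measure Ω}
    [IsFiniteMeasure ν] {g : Ω → ℝ} (hg : Integrable g ν) {S : Set Ω} (hS : MeasurableSet S)
    {a b : ℝ} (ha : ∀ x ∈ S, g x ≤ a) (hb : ∀ x ∈ Sᶜ, g x ≤ b) :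
    ∫ x, g x ∂ν ≤ ν.real S * a + ν.real Sᶜ * b := by
  have hset : ∀ {T : Set Ω} {c : ℝ}, MeasurableSet T → (∀ x ∈ T, g x ≤ c) →
      ∫ x in T, g x ∂ν ≤ ν.real T * c := fun hT hc => by
    rw [← smul_eq_mul, ← setIntegral_const]
    exact setIntegral_mono_on hg.integrableOn (integrableOn_const (measure_ne_top _ _)) hT hc
  rw [← integral_add_compl hS hg]
  exact add_le_add (hset hS ha) (hset hS.compl hb)

namespace ConcentratesIn

variable {I : Type*} [Preorder I] [(atTop : Filter I).NeBot]
  {X : Type*} [UniformSpace X] [MeasurableSpace X] [OpensMeasurableSpace X]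
  {μ : I → Measure X} [∀ i, IsProbabilityMeasure (μ i)]

theorem tendsto_measureReal_compl_image_s4 (hconc : ConcentratesIn μ) {A : I → Set X}
    (hA : ∀ i, MeasurableSet (A i)) (hA_half : ∀ i, 1 / 2 ≤ (μ i).real (A i))
    {U : SetRel X X} (hU : U ∈ uniformity X) (hUo : IsOpen U) :
    Tendsto (fun i => (μ i).real (U.image (A i))ᶜ) atTop (𝓝 0) := by
  have hliminf : 1 / 2 ≤ liminf (fun i => (μ i).real (A i)) atTop :=
    le_liminf_of_le (isBoundedUnder_of ⟨1, fun i => measureReal_le_one⟩).isCoboundedUnder_ge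
      (Eventually.of_forall hA_half)
  have hone : Tendsto (fun i => (μ i).real (U.image (A i))) atTop (𝓝 1) :=
    hconc A hA (lt_of_lt_of_le one_half_pos hliminf) U hU hUo
  simp_rw [probReal_compl_eq_one_sub hUo.relImage.measurableSet]
  simpa only [sub_self] using (tendsto_const_nhds (x := (1 : ℝ))).sub hone

theorem eventually_integral_le (hconc : ConcentratesIn μ) {g : I → X → ℝ} {c : I → ℝ}
    {C η ε : ℝ} (hg : ∀ i, Continuous (g i)) (hgC : ∀ i x, |g i x| ≤ C)
    {V : SetRel X X} (hV : V ∈ uniformity X) (hVg : ∀ i x y, (x, y) ∈ V → |g i x - g i y| ≤ η)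
    (hmed : ∀ i, 1 / 2 ≤ (μ i).real {x | g i x ≤ c i}) (hη : 0 ≤ η) (hε : 0 < ε) :
    ∀ᶠ i in atTop, ∫ x, g i x ∂μ i ≤ c i + η + ε := by
  obtain ⟨U, ⟨hU, hUo⟩, hUV⟩ := (uniformity_hasBasis_open (α := X)).mem_iff.mp hV
  have hA : ∀ i, MeasurableSet {x | g i x ≤ c i} :=
    fun i => measurableSet_le (hg i).measurable measurable_const
  have hsmall := (hconc.tendsto_measureReal_compl_image_s4 hA hmed hU hUo).const_mul (2 * |C|)
  rw [mul_zero] at hsmall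
  filter_upwards [hsmall.eventually (gt_mem_nhds hε)] with i hi
  set S := U.image {x | g i x ≤ c i}
  have hS : ∀ y ∈ S, g i y ≤ c i + η := by
    rintro y ⟨x, hx, hxy⟩
    linarith [(abs_le.1 (hVg i x y (hUV hxy))).1, show g i x ≤ c i from hx]
  have hc : -C ≤ c i := by
    obtain ⟨x, hx⟩ := nonempty_of_measureReal_ne_zero (by linarith [hmed i] :
      (μ i).real {x | g i x ≤ c i} ≠ 0)
    linarith [(abs_le.1 (hgC i x)).1, show g i x ≤ c i from hx]
  have hint : Integrable (g i) (μ i) :=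
    .of_bound (hg i).aestronglyMeasurable C (.of_forall (hgC i))
  have hsplit := integral_le_of_le_on_of_le_on_compl hint hUo.relImage.measurableSet hS
    (fun x _ => (abs_le.1 (hgC i x)).2)
  rw [← sub_sub_cancel 1 ((μ i).real S), ← probReal_compl_eq_one_sub hUo.relImage.measurableSet]
    at hsplit
  have hgap : (μ i).real Sᶜ * (C - (c i + η)) ≤ (μ i).real Sᶜ * (2 * |C|) :=
    mul_le_mul_of_nonneg_left (by linarith [le_abs_self C]) measureReal_nonneg
  linarith

theorem eventually_abs_integral_sub_le (hconc : ConcentratesIn μ) {g : I → X → ℝ}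
    {c : I → ℝ} {C η ε : ℝ} (hg : ∀ i, Continuous (g i)) (hgC : ∀ i x, |g i x| ≤ C)
    {V : SetRel X X} (hV : V ∈ uniformity X) (hVg : ∀ i x y, (x, y) ∈ V → |g i x - g i y| ≤ η)
    (hmed_le : ∀ i, 1 / 2 ≤ (μ i).real {x | g i x ≤ c i})
    (hmed_ge : ∀ i, 1 / 2 ≤ (μ i).real {x | c i ≤ g i x}) (hη : 0 ≤ η) (hε : 0 < ε) :
    ∀ᶠ i in atTop, |∫ x, g i x ∂μ i - c i| ≤ η + ε := by
  have upper := hconc.eventually_integral_le hg hgC hV hVg hmed_le hη hε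
  have lower := hconc.eventually_integral_le (g := fun i x => -g i x) (c := fun i => -c i)
    (fun i => (hg i).neg) (by simpa only [abs_neg] using hgC) hV
    (fun i x y hxy => by simpa only [neg_sub_neg, abs_sub_comm] using hVg i x y hxy)
    (by simpa only [neg_le_neg_iff] using hmed_ge) hη hε
  filter_upwards [upper, lower] with i hupper hlower
  rw [integral_neg] at hlower
  rw [abs_le]
  constructor <;> linarith

end ConcentratesIn

/-- If a net of Borel probability measures concentrates in a uniform space `X` and
`H` is UEB, then the expectations converge to the medians, uniformly in `f ∈ H`. -/
theorem concentration_expectation_median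
    {I : Type*} [Preorder I] [IsDirected I (· ≤ ·)] [Nonempty I]
    {X : Type*} [UniformSpace X] [MeasurableSpace X] [BorelSpace X]
    (μ : I → Measure X) [∀ i, IsProbabilityMeasure (μ i)]
    (hconc : ConcentratesIn μ)
    (H : Set (X → ℝ)) (hH : IsUEB H)
    (m : I → (X → ℝ) → ℝ)
    (hm : ∀ i, ∀ f ∈ H, 1 / 2 ≤ (μ i {x | m i f ≤ f x}).toReal ∧
      1 / 2 ≤ (μ i {x | f x ≤ m i f}).toReal) :
    Tendsto (fun i => ⨆ f ∈ H, |(∫ x, f x ∂μ i) - m i f|) atTop (𝓝 0) := by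
  obtain ⟨hcont, ⟨C, hC⟩, hequi⟩ := hH
  refine tendsto_biSup_abs_nhds_zero fun ε hε => ?_
  obtain ⟨V, hV, hVH⟩ := hequi (ε / 2) (half_pos hε)
  refine eventually_forall_mem_of_forall_selection fun F hF => ?_
  simpa only [add_halves] using hconc.eventually_abs_integral_sub_le (c := fun i => m i (F i))
    (fun i => (hcont _ (hF i)).continuous) (fun i => hC _ (hF i)) hV (fun i => hVH _ (hF i))
    (fun i => (hm i _ (hF i)).2) (fun i => (hm i _ (hF i)).1) (half_pos hε).le (half_pos hε)
end

section
/- Let X be a uniform space equipped with its Borel σ-algebra, let (μ_i)_{i ∈ I} be a net of Borel probability measures on X that concentrates in X, and let H be a UEB set of bounded uniformly continuous real-valued functions on X. Then for every ε > 0 one has lim_{i ∈ I} sup_{f ∈ H} μ_i({ x ∈ X : |f(x) − ∫ f dμ_i| > ε }) = 0. -/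
/-!
For `f ∈ H` with `|f| ≤ C`, Markov's inequality gives the sublevel set `{f ≤ ∫ f + ε/2}` mass at
least `(ε/2) / (2C + ε/2)`, uniformly in `f` and `i`. Concentration then pushes the mass of its
`U`-neighbourhood to `1`, and equicontinuity makes that neighbourhood disjoint from the upper
tail `{∫ f + ε < f}`. Applying this to `-f` handles the lower tail, and uniformity over `H`
follows by running the argument along an arbitrary choice `i ↦ f_i ∈ H`.
-/

open Filter MeasureTheory Topology

lemma div_le_measureReal_le_integral_add {X : Type*} [MeasurableSpace X] (μ : Measure X)
    [IsProbabilityMeasure μ] {f : X → ℝ} (hf : Measurable f) {C δ : ℝ}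
    (hC : ∀ x, |f x| ≤ C) (hδ : 0 < δ) :
    δ / (2 * C + δ) ≤ μ.real {x | f x ≤ ∫ y, f y ∂μ + δ} := by
  set m := ∫ y, f y ∂μ
  have hfC : ∀ x, 0 ≤ f x + C := fun x => by linarith [(abs_le.1 (hC x)).1]
  have hf_int : Integrable f μ := .of_bound hf.aestronglyMeasurable C (ae_of_all _ hC)
  have hm_le : m ≤ C :=
    (le_abs_self m).trans <| by
      simpa using norm_integral_le_of_norm_le_const (μ := μ) (f := f) (ae_of_all _ hC)
  have hint_add : ∫ x, (f x + C) ∂μ = m + C := by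
    rw [integral_add hf_int (integrable_const C)]; simp [m]
  have hm_add : 0 ≤ m + C := hint_add ▸ integral_nonneg hfC
  have hmarkov : (m + C + δ) * μ.real {x | m + δ < f x} ≤ m + C := by
    refine le_trans (mul_le_mul_of_nonneg_left (measureReal_mono fun x hx => ?_) (by linarith))
      (hint_add ▸ mul_meas_ge_le_integral_of_nonneg (ae_of_all _ hfC)
        (hf_int.add (integrable_const C)) (m + C + δ))
    simp only [Set.mem_ofPred_eq] at hx ⊢
    linarith
  have hcompl : μ.real {x | f x ≤ m + δ} = 1 - μ.real {x | m + δ < f x} := by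
    rw [← probReal_compl_eq_one_sub (measurableSet_lt measurable_const hf)]
    simp only [Set.compl_ofPred, not_lt]
  have hle_one : μ.real {x | m + δ < f x} ≤ 1 := measureReal_le_one
  rw [hcompl, div_le_iff₀ (by linarith)]
  nlinarith

lemma tendsto_biSup_of_forall_tendsto {ι α : Type*} {l : Filter ι} {g : ι → α → ℝ} {s : Set α}
    (hg : ∀ i, ∀ a ∈ s, 0 ≤ g i a)
    (h : ∀ F : ι → α, (∀ i, F i ∈ s) → Tendsto (fun i => g i (F i)) l (𝓝 0)) :
    Tendsto (fun i => ⨆ a ∈ s, g i a) l (𝓝 0) := by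
  classical
  rcases s.eq_empty_or_nonempty with rfl | ⟨a₀, ha₀⟩
  · simpa using tendsto_const_nhds
  refine tendsto_order.2 ⟨fun b hb => Eventually.of_forall fun i =>
    hb.trans_le (Real.iSup_nonneg fun a => Real.iSup_nonneg fun ha => hg i a ha), fun b hb => ?_⟩
  let F i := if hi : ∃ a ∈ s, b / 2 < g i a then hi.choose else a₀
  have hF : ∀ i, F i ∈ s := fun i => by
    unfold F; split_ifs with hi
    exacts [hi.choose_spec.1, ha₀]
  filter_upwards [(tendsto_order.1 (h F hF)).2 (b / 2) (half_pos hb)] with i hi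
  refine lt_of_le_of_lt (Real.iSup_le (fun a => Real.iSup_le (fun ha => ?_) (by linarith))
    (by linarith)) (half_lt_self hb)
  by_contra! hlt
  have hex : ∃ a ∈ s, b / 2 < g i a := ⟨a, ha, hlt⟩
  have : F i = hex.choose := dif_pos hex
  exact (this ▸ hi).not_gt hex.choose_spec.2

section Concentration

variable {I : Type*} [Preorder I] [IsDirected I (· ≤ ·)] [Nonempty I]
  {X : Type*} [UniformSpace X] [MeasurableSpace X]
  {μ : I → Measure X} [∀ i, IsProbabilityMeasure (μ i)]
  {f : I → X → ℝ} {C ε : ℝ} {U : Set (X × X)}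

lemma tendsto_measureReal_integral_add_lt (hconc : ConcentratesIn μ)
    (hf : ∀ i, Measurable (f i)) (hC : ∀ i x, |f i x| ≤ C) (hU : U ∈ uniformity X)
    (hfU : ∀ i x y, (x, y) ∈ U → |f i x - f i y| ≤ ε / 2) (hε : 0 < ε) :
    Tendsto (fun i => (μ i).real {x | ∫ y, f i y ∂μ i + ε < f i x}) atTop (𝓝 0) := by
  obtain ⟨V, ⟨hV, hV_open⟩, hVU⟩ := uniformity_hasBasis_open.mem_iff.1 hU
  let A i := {x | f i x ≤ ∫ y, f i y ∂μ i + ε / 2}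
  have hA_meas : ∀ i, MeasurableSet (A i) := fun i => measurableSet_le (hf i) measurable_const
  have hC_nonneg : 0 ≤ C := by
    obtain ⟨x⟩ := nonempty_of_isProbabilityMeasure (μ (Classical.arbitrary I))
    exact (abs_nonneg _).trans (hC (Classical.arbitrary I) x)
  have hA_pos : 0 < liminf (fun i => (μ i (A i)).toReal) atTop :=
    lt_of_lt_of_le (by positivity : 0 < ε / 2 / (2 * C + ε / 2))
      (le_liminf_of_le (isCoboundedUnder_ge_of_le atTop fun i => measureReal_le_one)
        (Eventually.of_forall fun i =>
          div_le_measureReal_le_integral_add (μ i) (hf i) (hC i) (half_pos hε)))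
  have hV_tail : ∀ i, (μ i).real {x | ∫ y, f i y ∂μ i + ε < f i x}
      ≤ 1 - (μ i {y | ∃ x ∈ A i, (x, y) ∈ V}).toReal := by
    intro i
    rw [le_sub_comm, ← probReal_compl_eq_one_sub (measurableSet_lt measurable_const (hf i))]
    refine measureReal_mono ?_
    rintro y ⟨x, hx, hxy⟩
    have hfxy := abs_le.1 (hfU i x y (hVU hxy))
    simp only [A, Set.mem_ofPred_eq] at hx
    simp only [Set.mem_compl_iff, Set.mem_ofPred_eq, not_lt]
    linarith
  refine squeeze_zero (fun i => measureReal_nonneg) hV_tail ?_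
  simpa using (tendsto_const_nhds (x := (1 : ℝ))).sub (hconc A hA_meas hA_pos V hV hV_open)

lemma tendsto_measureReal_lt_abs_sub_integral (hconc : ConcentratesIn μ)
    (hf : ∀ i, Measurable (f i)) (hC : ∀ i x, |f i x| ≤ C) (hU : U ∈ uniformity X)
    (hfU : ∀ i x y, (x, y) ∈ U → |f i x - f i y| ≤ ε / 2) (hε : 0 < ε) :
    Tendsto (fun i => (μ i).real {x | ε < |f i x - ∫ y, f i y ∂μ i|}) atTop (𝓝 0) := by
  have hupper := tendsto_measureReal_integral_add_lt hconc hf hC hU hfU hε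
  have hlower := tendsto_measureReal_integral_add_lt (f := fun i x => -f i x) hconc
    (fun i => (hf i).neg) (fun i x => by simpa using hC i x) hU
    (fun i x y hxy => by simpa [abs_sub_comm, neg_add_eq_sub] using hfU i x y hxy) hε
  refine squeeze_zero (fun i => measureReal_nonneg) (fun i => ?_) (by simpa using hupper.add hlower)
  refine (measureReal_mono fun x hx => ?_).trans (measureReal_union_le _ _)
  simp only [Set.mem_ofPred_eq, Set.mem_union, integral_neg] at hx ⊢
  rcases lt_abs.1 hx with h | h
  exacts [Or.inl (by linarith), Or.inr (by linarith)]

end Concentration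

/-- If a net of Borel probability measures concentrates in a uniform space `X` and
`H` is UEB, then the measures of the sets where `f ∈ H` deviates from its expectation
by more than `ε` tend to zero, uniformly in `f ∈ H`. -/
theorem concentration_expectation
    {I : Type*} [Preorder I] [IsDirected I (· ≤ ·)] [Nonempty I]
    {X : Type*} [UniformSpace X] [MeasurableSpace X] [BorelSpace X]
    (μ : I → Measure X) [∀ i, IsProbabilityMeasure (μ i)]
    (hconc : ConcentratesIn μ)
    (H : Set (X → ℝ)) (hH : IsUEB H)
    (ε : ℝ) (hε : 0 < ε) :
    Tendsto (fun i => ⨆ f ∈ H, (μ i {x | ε < |f x - ∫ y, f y ∂μ i|}).toReal)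
      atTop (𝓝 0) := by
  obtain ⟨huc, ⟨C, hC⟩, hequi⟩ := hH
  obtain ⟨U, hU, hfU⟩ := hequi (ε / 2) (half_pos hε)
  refine tendsto_biSup_of_forall_tendsto (fun i f _ => ENNReal.toReal_nonneg) fun F hF => ?_
  exact tendsto_measureReal_lt_abs_sub_integral hconc
    (fun i => (huc _ (hF i)).continuous.measurable) (fun i => hC _ (hF i)) hU
    (fun i => hfU _ (hF i)) hε
end

section
/- A topological group G is amenable if and only if, for every ε > 0, every UEB set H of bounded right-uniformly continuous real-valued functions on G, and every finite subset E ⊆ G, there exists a finitely supported probability measure μ on G (i.e., nonnegative weights w : G → ℝ with finite support summing to 1) such that for every g ∈ E, sup_{f ∈ H} |Σ_{x} w(x)·f(x) − Σ_{x} w(x)·f(g·x)| ≤ ε. -/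
open Topology

/-- The bounded real-valued functions on a topological group `G` which are uniformly
continuous with respect to the right uniformity of `G`. -/
def RUCb (G : Type*) [Group G] [TopologicalSpace G] : Set (G → ℝ) :=
  { f | (∃ C : ℝ, ∀ x, |f x| ≤ C) ∧
    ∀ ε : ℝ, 0 < ε → ∃ U ∈ 𝓝 (1 : G), ∀ x y : G, x * y⁻¹ ∈ U → |f x - f y| ≤ ε }

/-- A set `H ⊆ RUCb G` is UEB if it is uniformly equicontinuous with respect to the
right uniformity and bounded in the supremum norm. -/
def IsRUEB (G : Type*) [Group G] [TopologicalSpace G] (H : Set (G → ℝ)) : Prop :=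
  H ⊆ RUCb G ∧ (∃ C : ℝ, ∀ f ∈ H, ∀ x, |f x| ≤ C) ∧
  ∀ ε : ℝ, 0 < ε → ∃ U ∈ 𝓝 (1 : G), ∀ f ∈ H, ∀ x y : G, x * y⁻¹ ∈ U → |f x - f y| ≤ ε

/-- `G` is amenable: there is a left-invariant mean on `RUCb G`, i.e. a positive,
linear, unital, left-translation-invariant functional. -/
def HasLeftInvariantMean (G : Type*) [Group G] [TopologicalSpace G] : Prop :=
  ∃ Λ : (G → ℝ) → ℝ,
    (∀ f ∈ RUCb G, ∀ g ∈ RUCb G, Λ (f + g) = Λ f + Λ g) ∧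
    (∀ f ∈ RUCb G, ∀ c : ℝ, Λ (c • f) = c * Λ f) ∧
    (∀ f ∈ RUCb G, (∀ x, 0 ≤ f x) → 0 ≤ Λ f) ∧
    Λ (fun _ => 1) = 1 ∧
    (∀ f ∈ RUCb G, ∀ g : G, Λ (fun x => f (g * x)) = Λ f)

/-!
Sufficiency: index the finitely supported probability measures supplied by the hypothesis by a
finite set of test functions, a finite set of translations and a precision `1 / (n + 1)`; the
limit of `f ↦ ∑ₓ w x * f x` along an ultrafilter finer than `atTop` is a left-invariant mean.

Necessity: if no `w` in the simplex is `ε`-invariant on `(H, E)`, the vectors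
`(∑ₓ w x * (f x - f (g * x)))_{g ∈ E, f ∈ H}` form a convex subset of `E → ℓ^∞(H)` avoiding the
`ε`-ball, and Hahn–Banach separates the two by a functional `φ`. The functions
`f_g x = φ (Pi.single g (f ↦ f x))` lie in `RUCb G` because `H` is UEB, and
`∑_g (f_g - f_g ∘ λ_g) ≥ u > 0` everywhere, which a left-invariant mean forbids (Dixmier).
-/

open Filter
open scoped lp ENNReal

section RUCb

variable {G : Type*} [Group G] [TopologicalSpace G]

lemma RUCb.const (c : ℝ) : (fun _ : G => c) ∈ RUCb G :=
  ⟨⟨|c|, fun _ => le_rfl⟩, fun _ hε => ⟨Set.univ, univ_mem, fun _ _ _ => by simpa using hε.le⟩⟩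

lemma RUCb.add {f g : G → ℝ} (hf : f ∈ RUCb G) (hg : g ∈ RUCb G) : f + g ∈ RUCb G := by
  obtain ⟨⟨C, hC⟩, hfu⟩ := hf
  obtain ⟨⟨D, hD⟩, hgu⟩ := hg
  refine ⟨⟨C + D, fun x => (abs_add_le _ _).trans (add_le_add (hC x) (hD x))⟩, fun ε hε => ?_⟩
  obtain ⟨U, hU, hfU⟩ := hfu (ε / 2) (half_pos hε)
  obtain ⟨V, hV, hgV⟩ := hgu (ε / 2) (half_pos hε)
  refine ⟨U ∩ V, inter_mem hU hV, fun x y hxy => ?_⟩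
  calc |(f + g) x - (f + g) y| = |(f x - f y) + (g x - g y)| := by
        rw [Pi.add_apply, Pi.add_apply, add_sub_add_comm]
    _ ≤ |f x - f y| + |g x - g y| := abs_add_le _ _
    _ ≤ ε / 2 + ε / 2 := add_le_add (hfU x y hxy.1) (hgV x y hxy.2)
    _ = ε := add_halves ε

lemma ContinuousLinearMap.comp_mem_RUCb {V : Type*} [SeminormedAddCommGroup V] [NormedSpace ℝ V]
    (φ : V →L[ℝ] ℝ) {F : G → V} (hbdd : ∃ C, ∀ x, ‖F x‖ ≤ C)
    (huc : ∀ ε : ℝ, 0 < ε → ∃ U ∈ 𝓝 (1 : G), ∀ x y, x * y⁻¹ ∈ U → ‖F x - F y‖ ≤ ε) :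
    (fun x => φ (F x)) ∈ RUCb G := by
  obtain ⟨C, hC⟩ := hbdd
  refine ⟨⟨‖φ‖ * C, fun x => ?_⟩, fun ε hε => ?_⟩
  · rw [← Real.norm_eq_abs]
    exact (φ.le_opNorm _).trans (mul_le_mul_of_nonneg_left (hC x) (norm_nonneg φ))
  obtain ⟨U, hU, hFU⟩ := huc (ε / (‖φ‖ + 1)) (by positivity)
  refine ⟨U, hU, fun x y hxy => ?_⟩
  calc |φ (F x) - φ (F y)| = ‖φ (F x - F y)‖ := by rw [map_sub, Real.norm_eq_abs]
    _ ≤ ‖φ‖ * ‖F x - F y‖ := φ.le_opNorm _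
    _ ≤ (‖φ‖ + 1) * (ε / (‖φ‖ + 1)) :=
        mul_le_mul (le_add_of_nonneg_right zero_le_one) (hFU x y hxy) (norm_nonneg _)
          (by positivity)
    _ = ε := mul_div_cancel₀ _ (by positivity)

lemma RUCb.smul {f : G → ℝ} (hf : f ∈ RUCb G) (c : ℝ) : c • f ∈ RUCb G := by
  obtain ⟨⟨C, hC⟩, hfu⟩ := hf
  exact (ContinuousLinearMap.mul ℝ ℝ c).comp_mem_RUCb (F := f) ⟨C, hC⟩ hfu

lemma RUCb.sub {f g : G → ℝ} (hf : f ∈ RUCb G) (hg : g ∈ RUCb G) : f - g ∈ RUCb G := by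
  simpa [sub_eq_add_neg] using RUCb.add hf (RUCb.smul hg (-1))

lemma RUCb.sum {ι : Type*} (s : Finset ι) {F : ι → G → ℝ} (hF : ∀ i ∈ s, F i ∈ RUCb G) :
    ∑ i ∈ s, F i ∈ RUCb G :=
  Finset.sum_induction F (· ∈ RUCb G) (fun _ _ => RUCb.add) (RUCb.const 0) hF

lemma RUCb.comp_mul_left [SeparatelyContinuousMul G] {f : G → ℝ} (hf : f ∈ RUCb G) (g : G) :
    (fun x => f (g * x)) ∈ RUCb G := by
  obtain ⟨hbdd, hfu⟩ := hf
  refine ⟨hbdd.imp fun C hC x => hC (g * x), fun ε hε => ?_⟩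
  obtain ⟨U, hU, hfU⟩ := hfu ε hε
  have hconj : Tendsto (fun z => g * z * g⁻¹) (𝓝 1) (𝓝 1) := by
    simpa using (IsTopologicalGroup.continuous_conj g).tendsto 1
  exact ⟨_, hconj hU, fun x y hxy => hfU _ _ (by simpa [mul_assoc] using hxy)⟩

lemma Set.Finite.isRUEB {H : Set (G → ℝ)} (hH : H.Finite) (hsub : H ⊆ RUCb G) : IsRUEB G H := by
  refine ⟨hsub, ?_, fun ε hε => ?_⟩
  · choose! C hC using fun f (hf : f ∈ H) => (hsub hf).1
    obtain ⟨M, hM⟩ := (hH.image C).bddAbove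
    exact ⟨M, fun f hf x => (hC f hf x).trans (hM (Set.mem_image_of_mem C hf))⟩
  · choose! U hU hUε using fun f (hf : f ∈ H) => (hsub hf).2 ε hε
    exact ⟨⋂ f ∈ H, U f, (biInter_mem hH).2 hU, fun f hf x y hxy =>
      hUε f hf x y (Set.mem_iInter₂.1 hxy f hf)⟩

end RUCb

section Mean

variable {G : Type*} [Group G] [TopologicalSpace G] {Λ : (G → ℝ) → ℝ}

lemma mean_sub (hadd : ∀ f ∈ RUCb G, ∀ g ∈ RUCb G, Λ (f + g) = Λ f + Λ g)
    (hsmul : ∀ f ∈ RUCb G, ∀ c : ℝ, Λ (c • f) = c * Λ f) {f g : G → ℝ} (hf : f ∈ RUCb G)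
    (hg : g ∈ RUCb G) : Λ (f - g) = Λ f - Λ g := by
  rw [sub_eq_add_neg, ← neg_one_smul ℝ g, hadd f hf _ (RUCb.smul hg _), hsmul g hg]
  ring

lemma mean_sum (hadd : ∀ f ∈ RUCb G, ∀ g ∈ RUCb G, Λ (f + g) = Λ f + Λ g)
    (hsmul : ∀ f ∈ RUCb G, ∀ c : ℝ, Λ (c • f) = c * Λ f) {ι : Type*} (s : Finset ι)
    {F : ι → G → ℝ} (hF : ∀ i ∈ s, F i ∈ RUCb G) : Λ (∑ i ∈ s, F i) = ∑ i ∈ s, Λ (F i) := by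
  classical
  induction s using Finset.induction_on with
  | empty => simpa using hsmul 0 (RUCb.const 0) 0
  | insert i s hi ih =>
    have hFs : ∀ j ∈ s, F j ∈ RUCb G := fun j hj => hF j (Finset.mem_insert_of_mem hj)
    rw [Finset.sum_insert hi, Finset.sum_insert hi,
      hadd _ (hF i (Finset.mem_insert_self i s)) _ (RUCb.sum s hFs), ih hFs]

lemma le_mean (hadd : ∀ f ∈ RUCb G, ∀ g ∈ RUCb G, Λ (f + g) = Λ f + Λ g)
    (hsmul : ∀ f ∈ RUCb G, ∀ c : ℝ, Λ (c • f) = c * Λ f)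
    (hpos : ∀ f ∈ RUCb G, (∀ x, 0 ≤ f x) → 0 ≤ Λ f) (hone : Λ (fun _ => 1) = 1)
    {f : G → ℝ} (hf : f ∈ RUCb G) {c : ℝ} (hc : ∀ x, c ≤ f x) : c ≤ Λ f := by
  have hconst : (fun _ : G => c) = c • fun _ => (1 : ℝ) := by ext; simp
  have := hpos _ (RUCb.sub hf (RUCb.const c)) fun x => sub_nonneg.2 (hc x)
  rw [mean_sub hadd hsmul hf (RUCb.const c), hconst, hsmul _ (RUCb.const 1), hone] at this
  linarith

theorem HasLeftInvariantMean.le_zero_of_le_sum_sub_comp_mul_left [SeparatelyContinuousMul G]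
    (hmean : HasLeftInvariantMean G) {ι : Type*} (s : Finset ι) (g : ι → G) (f : ι → G → ℝ)
    (hf : ∀ i ∈ s, f i ∈ RUCb G) {u : ℝ} (hu : ∀ y, u ≤ ∑ i ∈ s, (f i y - f i (g i * y))) :
    u ≤ 0 := by
  obtain ⟨Λ, hadd, hsmul, hpos, hone, hinv⟩ := hmean
  have htrans (i) (hi : i ∈ s) := RUCb.comp_mul_left (hf i hi) (g i)
  have hdiff (i) (hi : i ∈ s) := RUCb.sub (hf i hi) (htrans i hi)
  calc u ≤ Λ (∑ i ∈ s, (f i - fun y => f i (g i * y))) :=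
        le_mean hadd hsmul hpos hone (RUCb.sum s hdiff) fun y => by simpa using hu y
    _ = 0 := by
        rw [mean_sum hadd hsmul s hdiff]
        refine Finset.sum_eq_zero fun i hi => ?_
        rw [mean_sub hadd hsmul (hf i hi) (htrans i hi), hinv _ (hf i hi), sub_self]

end Mean

section Simplex

variable (α : Type*)

def finsuppSimplex : Set (α →₀ ℝ) := {w | (∀ x, 0 ≤ w x) ∧ ∑ x ∈ w.support, w x = 1}

lemma convex_finsuppSimplex : Convex ℝ (finsuppSimplex α) := by
  have hmass (w : α →₀ ℝ) :
      ∑ x ∈ w.support, w x = Finsupp.linearCombination ℝ (fun _ => (1 : ℝ)) w := by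
    simp [Finsupp.linearCombination_apply, Finsupp.sum]
  rintro w ⟨hw₀, hw₁⟩ v ⟨hv₀, hv₁⟩ a b ha hb hab
  refine ⟨fun x => ?_, ?_⟩
  · simp only [Finsupp.add_apply, Finsupp.smul_apply, smul_eq_mul]
    exact add_nonneg (mul_nonneg ha (hw₀ x)) (mul_nonneg hb (hv₀ x))
  · rw [hmass] at hw₁ hv₁ ⊢
    simp [hw₁, hv₁, hab]

variable {α}

lemma single_mem_finsuppSimplex (x : α) : Finsupp.single x 1 ∈ finsuppSimplex α := by
  classical
  refine ⟨fun y => ?_, by simp⟩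
  rw [Finsupp.single_apply]
  split_ifs <;> norm_num

lemma abs_sum_mul_le_of_mem_finsuppSimplex {w : α →₀ ℝ} (hw : w ∈ finsuppSimplex α) {f : α → ℝ}
    {C : ℝ} (hC : ∀ x, |f x| ≤ C) : |∑ x ∈ w.support, w x * f x| ≤ C :=
  calc |∑ x ∈ w.support, w x * f x| ≤ ∑ x ∈ w.support, w x * C := by
        refine (Finset.abs_sum_le_sum_abs _ _).trans (Finset.sum_le_sum fun x _ => ?_)
        rw [abs_mul, abs_of_nonneg (hw.1 x)]
        exact mul_le_mul_of_nonneg_left (hC x) (hw.1 x)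
    _ = C := by rw [← Finset.sum_mul, hw.2, one_mul]

end Simplex

section Evaluation

variable {X : Type*} {H : Set (X → ℝ)}

def evalLp (hH : ∃ C, ∀ f ∈ H, ∀ x, |f x| ≤ C) (x : X) : ℓ^∞(H, ℝ) :=
  ⟨fun f => f.1 x, memℓp_infty <| hH.imp fun C hC => by
    rintro _ ⟨f, rfl⟩
    exact hC f f.2 x⟩

variable (hH : ∃ C, ∀ f ∈ H, ∀ x, |f x| ≤ C)

@[simp]
lemma evalLp_apply (x : X) (f : H) : evalLp hH x f = f.1 x := rfl

lemma norm_evalLp_sub_le {x y : X} {δ : ℝ} (hδ : 0 ≤ δ) (h : ∀ f ∈ H, |f x - f y| ≤ δ) :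
    ‖evalLp hH x - evalLp hH y‖ ≤ δ :=
  lp.norm_le_of_forall_le hδ fun f => by simpa using h f f.2

lemma exists_norm_evalLp_le : ∃ C, ∀ x, ‖evalLp hH x‖ ≤ C := by
  obtain ⟨C, hC⟩ := hH
  exact ⟨max C 0, fun x => lp.norm_le_of_forall_le (le_max_right C 0) fun f =>
    (hC f f.2 x).trans (le_max_left C 0)⟩

end Evaluation

section AlmostInvariance

variable {G : Type*} [Mul G] {H : Set (G → ℝ)}

def IsAlmostInvariant (w : G →₀ ℝ) (ε : ℝ) (H : Set (G → ℝ)) (E : Finset G) : Prop :=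
  ∀ g ∈ E, ∀ f ∈ H, |(∑ x ∈ w.support, w x * f x) - ∑ x ∈ w.support, w x * f (g * x)| ≤ ε

noncomputable def translationDefect (hH : ∃ C, ∀ f ∈ H, ∀ x, |f x| ≤ C) (E : Finset G) (y : G) :
    E → ℓ^∞(H, ℝ) :=
  fun g => evalLp hH y - evalLp hH (g * y)

lemma linearCombination_translationDefect_apply (hH : ∃ C, ∀ f ∈ H, ∀ x, |f x| ≤ C)
    {E : Finset G} (w : G →₀ ℝ) (g : E) (f : H) :
    Finsupp.linearCombination ℝ (translationDefect hH E) w g f =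
      (∑ x ∈ w.support, w x * f.1 x) - ∑ x ∈ w.support, w x * f.1 (g * x) := by
  rw [Finsupp.linearCombination_apply, Finsupp.sum, Finset.sum_apply, lp.coeFn_sum,
    Finset.sum_apply, ← Finset.sum_sub_distrib]
  exact Finset.sum_congr rfl fun x _ => mul_sub (w x) (f.1 x) (f.1 (g * x))

end AlmostInvariance

section Separation

variable {G : Type*} [Group G] [TopologicalSpace G] {H : Set (G → ℝ)}

lemma IsRUEB.exists_nhds_norm_evalLp_sub_le (hH : IsRUEB G H) (δ : ℝ) (hδ : 0 < δ) :
    ∃ U ∈ 𝓝 (1 : G), ∀ x y, x * y⁻¹ ∈ U → ‖evalLp hH.2.1 x - evalLp hH.2.1 y‖ ≤ δ :=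
  (hH.2.2 δ hδ).imp fun _ ⟨hU, hUδ⟩ =>
    ⟨hU, fun x y hxy => norm_evalLp_sub_le _ hδ.le fun f hf => hUδ f hf x y hxy⟩

theorem exists_le_sum_sub_comp_mul_left_of_forall_not_isAlmostInvariant {ε : ℝ} (hε : 0 < ε)
    (hH : IsRUEB G H) (E : Finset G) (h : ∀ w ∈ finsuppSimplex G, ¬ IsAlmostInvariant w ε H E) :
    ∃ (f : E → G → ℝ) (u : ℝ), (∀ g, f g ∈ RUCb G) ∧ 0 < u ∧
      ∀ y, u ≤ ∑ g : E, (f g y - f g (g * y)) := by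
  classical
  set S := Finsupp.linearCombination ℝ (translationDefect hH.2.1 E)
  have hdisj : Disjoint (Metric.ball 0 ε) (S '' finsuppSimplex G) := by
    refine Set.disjoint_right.2 ?_
    rintro _ ⟨w, hw, rfl⟩ hball
    obtain ⟨g, hg, f, hf, hlt⟩ : ∃ g ∈ E, ∃ f ∈ H,
        ε < |(∑ x ∈ w.support, w x * f x) - ∑ x ∈ w.support, w x * f (g * x)| := by
      simpa [IsAlmostInvariant] using h w hw
    have hle := (lp.norm_apply_le_norm ENNReal.top_ne_zero (S w ⟨g, hg⟩) ⟨f, hf⟩).trans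
      (norm_le_pi_norm (S w) ⟨g, hg⟩)
    rw [linearCombination_translationDefect_apply, Real.norm_eq_abs] at hle
    rw [mem_ball_zero_iff] at hball
    linarith
  obtain ⟨φ, u, hφball, hφS⟩ := geometric_hahn_banach_open (convex_ball 0 ε) Metric.isOpen_ball
    ((convex_finsuppSimplex G).linear_image S) hdisj
  refine ⟨fun g x => φ (Pi.single g (evalLp hH.2.1 x)), u, fun g =>
    (φ.comp (ContinuousLinearMap.single ℝ _ g)).comp_mem_RUCb (exists_norm_evalLp_le hH.2.1)
      hH.exists_nhds_norm_evalLp_sub_le, by simpa using hφball 0 (Metric.mem_ball_self hε),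
    fun y => ?_⟩
  calc u ≤ φ (S (Finsupp.single y 1)) := hφS _ ⟨_, single_mem_finsuppSimplex y, rfl⟩
    _ = _ := by
      rw [Finsupp.linearCombination_single, one_smul,
        ← Finset.univ_sum_single (translationDefect hH.2.1 E y), map_sum]
      simp [translationDefect, Pi.single_sub]

end Separation

lemma Ultrafilter.tendsto_limUnder_of_norm_le {ι E : Type*} [SeminormedAddCommGroup E]
    [ProperSpace E] (𝒰 : Ultrafilter ι) {u : ι → E} {C : ℝ} (h : ∀ i, ‖u i‖ ≤ C) :
    Tendsto u 𝒰 (𝓝 (limUnder 𝒰 u)) := by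
  obtain ⟨a, -, ha⟩ := (isCompact_closedBall (0 : E) C).ultrafilter_le_nhds (𝒰.map u)
    (le_principal_iff.2 (Ultrafilter.mem_map.2 (Eventually.of_forall fun i =>
      mem_closedBall_zero_iff.2 (h i))))
  exact tendsto_nhds_limUnder ⟨a, ha⟩

lemma Ultrafilter.tendsto_limUnder_sum_mul {ι α : Type*} (𝒰 : Ultrafilter ι)
    {w : ι → α →₀ ℝ} (hw : ∀ i, w i ∈ finsuppSimplex α) {f : α → ℝ} (hf : ∃ C, ∀ x, |f x| ≤ C) :
    Tendsto (fun i => ∑ x ∈ (w i).support, w i x * f x) 𝒰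
      (𝓝 (limUnder 𝒰 fun i => ∑ x ∈ (w i).support, w i x * f x)) :=
  hf.elim fun _ hC => 𝒰.tendsto_limUnder_of_norm_le fun i =>
    abs_sum_mul_le_of_mem_finsuppSimplex (hw i) hC

theorem hasLeftInvariantMean_of_forall_exists_isAlmostInvariant {G : Type*} [Group G]
    [TopologicalSpace G]
    (h : ∀ ε : ℝ, 0 < ε → ∀ H : Set (G → ℝ), IsRUEB G H → ∀ E : Finset G,
      ∃ w ∈ finsuppSimplex G, IsAlmostInvariant w ε H E) :
    HasLeftInvariantMean G := by
  classical
  choose w hw hinv using fun i : Finset (G → ℝ) × Finset G × ℕ =>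
    h (1 / (i.2.2 + 1)) Nat.one_div_pos_of_nat _
      ((i.1.finite_toSet.inter_of_left _).isRUEB Set.inter_subset_right) i.2.1
  set 𝒰 := Ultrafilter.of (atTop : Filter (Finset (G → ℝ) × Finset G × ℕ))
  set m : Finset (G → ℝ) × Finset G × ℕ → (G → ℝ) → ℝ :=
    fun i f => ∑ x ∈ (w i).support, w i x * f x
  have hlim (f : G → ℝ) (hf : ∃ C, ∀ x, |f x| ≤ C) :
      Tendsto (m · f) 𝒰 (𝓝 (limUnder 𝒰 (m · f))) :=
    𝒰.tendsto_limUnder_sum_mul hw hf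
  refine ⟨fun f => limUnder 𝒰 (m · f), fun f hf g hg => ?_, fun f hf c => ?_,
    fun f hf hf₀ => ?_, ?_, fun f hf g => ?_⟩
  · refine tendsto_nhds_unique (hlim _ (RUCb.add hf hg).1) ?_
    simpa [m, mul_add, Finset.sum_add_distrib] using (hlim f hf.1).add (hlim g hg.1)
  · refine tendsto_nhds_unique (hlim _ (RUCb.smul hf c).1) ?_
    simpa [m, Finset.mul_sum, mul_left_comm] using (hlim f hf.1).const_mul c
  · exact ge_of_tendsto' (hlim f hf.1) fun i =>
      Finset.sum_nonneg fun x _ => mul_nonneg ((hw i).1 x) (hf₀ x)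
  · have hm : (m · fun _ => 1) = fun _ => 1 := funext fun i => by simpa [m] using (hw i).2
    exact tendsto_nhds_unique (hlim _ (RUCb.const 1).1) (hm ▸ tendsto_const_nhds)
  · obtain ⟨C, hC⟩ := hf.1
    have hprec : Tendsto (fun i : Finset (G → ℝ) × Finset G × ℕ => (1 : ℝ) / (i.2.2 + 1))
        atTop (𝓝 0) :=
      tendsto_one_div_add_atTop_nhds_zero_nat.comp
        (tendsto_atTop_atTop_of_monotone (fun _ _ h => h.2.2) fun n => ⟨(∅, ∅, n), le_rfl⟩)
    have hsmall : Tendsto (fun i => m i f - m i fun x => f (g * x)) 𝒰 (𝓝 0) := by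
      refine (squeeze_zero_norm' ?_ hprec).mono_left (Ultrafilter.of_le _)
      filter_upwards [eventually_ge_atTop ({f}, {g}, 0)] with i hi
      exact hinv i g (hi.2.1 (Finset.mem_singleton_self g)) f
        ⟨hi.1 (Finset.mem_singleton_self f), hf⟩
    have := tendsto_nhds_unique ((hlim f ⟨C, hC⟩).sub (hlim _ ⟨C, fun x => hC (g * x)⟩)) hsmall
    linarith

theorem HasLeftInvariantMean.exists_isAlmostInvariant {G : Type*} [Group G] [TopologicalSpace G]
    [SeparatelyContinuousMul G] (hmean : HasLeftInvariantMean G) {ε : ℝ} (hε : 0 < ε)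
    {H : Set (G → ℝ)} (hH : IsRUEB G H) (E : Finset G) :
    ∃ w ∈ finsuppSimplex G, IsAlmostInvariant w ε H E := by
  by_contra! h
  obtain ⟨f, u, hf, hu, hle⟩ :=
    exists_le_sum_sub_comp_mul_left_of_forall_not_isAlmostInvariant hε hH E h
  exact hu.not_ge <|
    hmean.le_zero_of_le_sum_sub_comp_mul_left Finset.univ Subtype.val f (fun g _ => hf g) hle

/-- A topological group is amenable iff for every `ε > 0`, every RUEB set `H` and
every finite `E ⊆ G` there is a finitely supported probability measure on `G` which
is `ε`-invariant on `H` under left translations by elements of `E`. -/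
theorem amenable_iff_almost_invariant_finitely_supported_measures
    (G : Type*) [Group G] [TopologicalSpace G] [IsTopologicalGroup G] :
    HasLeftInvariantMean G ↔
    ∀ ε : ℝ, 0 < ε → ∀ H : Set (G → ℝ), IsRUEB G H → ∀ E : Finset G,
      ∃ w : G →₀ ℝ, (∀ x, 0 ≤ w x) ∧ (∑ x ∈ w.support, w x) = 1 ∧
        ∀ g ∈ E, ∀ f ∈ H,
          |(∑ x ∈ w.support, w x * f x) - ∑ x ∈ w.support, w x * f (g * x)| ≤ ε := by
  refine ⟨fun hmean ε hε H hH E => ?_, fun h =>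
    hasLeftInvariantMean_of_forall_exists_isAlmostInvariant fun ε hε H hH E => ?_⟩
  · obtain ⟨w, ⟨hw₀, hw₁⟩, hw⟩ := hmean.exists_isAlmostInvariant hε hH E
    exact ⟨w, hw₀, hw₁, hw⟩
  · obtain ⟨w, hw₀, hw₁, hw⟩ := h ε hε H hH E
    exact ⟨w, ⟨hw₀, hw₁⟩, hw⟩
end

section
/- Let G be a topological group. If there exists a net (μ_i)_{i ∈ I} of Borel probability measures on G that converges to invariance in the UEB topology, i.e., for every UEB set H of bounded right-uniformly continuous real-valued functions on G and every g ∈ G one has lim_{i ∈ I} sup_{f ∈ H} |∫ f dμ_i − ∫ (f ∘ λ_g) dμ_i| = 0, then G is amenable, i.e., there exists a left-invariant mean on RUC_b(G). -/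
open Filter MeasureTheory Topology

/-! Take an ultrafilter `𝒰` on `I` finer than `atTop`. Every `f ∈ RUCb G` is bounded, so the
integrals `∫ f ∂μ i` converge along `𝒰`; their limit is positive, linear and unital because
integration against probability measures is. The singleton `{f}` is UEB, so the hypothesis gives
`∫ f ∂μ i - ∫ f (g * ·) ∂μ i → 0` along `atTop`, hence along `𝒰`: the limit is left invariant. -/

-- In `ℝ` a supremum over an empty index is `0`, hence the sign condition.
theorem Real.iSup_mem_singleton {α : Type*} {F : α → ℝ} {a : α} (ha : 0 ≤ F a) :
    ⨆ b ∈ ({a} : Set α), F b = F a := by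
  have hle : ∀ b, ⨆ _ : b ∈ ({a} : Set α), F b ≤ F a := fun b =>
    Real.iSup_le (fun hb => (Set.mem_singleton_iff.1 hb).symm ▸ le_rfl) ha
  refine le_antisymm (Real.iSup_le hle ha) (le_ciSup_of_le ⟨F a, ?_⟩ a ?_)
  · exact Set.forall_mem_range.2 hle
  · rw [ciSup_pos (Set.mem_singleton a)]

theorem Ultrafilter.exists_tendsto_of_abs_le {ι : Type*} (𝒰 : Ultrafilter ι) {u : ι → ℝ} {C : ℝ}
    (hu : ∀ i, |u i| ≤ C) : ∃ a, Tendsto u 𝒰 (𝓝 a) := by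
  obtain ⟨a, -, ha⟩ := isCompact_Icc.ultrafilter_le_nhds' (𝒰.map u)
    (Ultrafilter.mem_map.2 (univ_mem' fun i => abs_le.1 (hu i)))
  exact ⟨a, ha⟩

namespace RUCb

variable {G : Type*} [Group G] [TopologicalSpace G] [ContinuousMul G] {f : G → ℝ}

theorem continuous (hf : f ∈ RUCb G) : Continuous f := by
  refine continuous_iff_continuousAt.2 fun y => Metric.tendsto_nhds.2 fun ε hε => ?_
  obtain ⟨U, hU, hUf⟩ := hf.2 (ε / 2) (half_pos hε)
  have hUy : {x : G | x * y⁻¹ ∈ U} ∈ 𝓝 y :=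
    (continuous_mul_const y⁻¹).continuousAt.preimage_mem_nhds (by simpa using hU)
  filter_upwards [hUy] with x hx
  exact (hUf x y hx).trans_lt (half_lt_self hε)

theorem integrable [MeasurableSpace G] [OpensMeasurableSpace G] (hf : f ∈ RUCb G)
    (ν : Measure G) [IsFiniteMeasure ν] : Integrable f ν :=
  let ⟨C, hC⟩ := hf.1
  .of_bound (RUCb.continuous hf).aestronglyMeasurable C (.of_forall hC)

end RUCb

theorem isRUEB_singleton {G : Type*} [Group G] [TopologicalSpace G] {f : G → ℝ}
    (hf : f ∈ RUCb G) : IsRUEB G {f} := by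
  refine ⟨Set.singleton_subset_iff.2 hf, ?_, fun ε hε => ?_⟩
  · obtain ⟨C, hC⟩ := hf.1
    exact ⟨C, by simpa using hC⟩
  · obtain ⟨U, hU, hUf⟩ := hf.2 ε hε
    exact ⟨U, hU, by simpa using hUf⟩

section UltralimitMean

variable {G : Type*} [MeasurableSpace G] {I : Type*} (μ : I → Measure G) (𝒰 : Ultrafilter I)

/-- A junk value unless the integrals converge along `𝒰`, which they do for bounded `f`
(`tendsto_ultralimitMean`). -/
noncomputable def ultralimitMean (f : G → ℝ) : ℝ :=
  limUnder (𝒰 : Filter I) fun i => ∫ x, f x ∂μ i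

variable {μ 𝒰} [∀ i, IsProbabilityMeasure (μ i)] {f f' : G → ℝ}

theorem tendsto_ultralimitMean (hf : ∃ C, ∀ x, |f x| ≤ C) :
    Tendsto (fun i => ∫ x, f x ∂μ i) 𝒰 (𝓝 (ultralimitMean μ 𝒰 f)) := by
  obtain ⟨C, hC⟩ := hf
  obtain ⟨a, ha⟩ := 𝒰.exists_tendsto_of_abs_le fun i => by
    simpa using norm_integral_le_of_norm_le_const (μ := μ i)
      (.of_forall fun x => (Real.norm_eq_abs _).trans_le (hC x))
  exact tendsto_nhds_limUnder ⟨a, ha⟩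

theorem ultralimitMean_add [Group G] [TopologicalSpace G] [ContinuousMul G]
    [OpensMeasurableSpace G] (hf : f ∈ RUCb G) (hf' : f' ∈ RUCb G) :
    ultralimitMean μ 𝒰 (f + f') = ultralimitMean μ 𝒰 f + ultralimitMean μ 𝒰 f' :=
  ((tendsto_ultralimitMean hf.1).add (tendsto_ultralimitMean hf'.1)).congr
    (fun _ => (integral_add (RUCb.integrable hf _) (RUCb.integrable hf' _)).symm) |>.limUnder_eq

theorem ultralimitMean_smul (hf : ∃ C, ∀ x, |f x| ≤ C) (c : ℝ) :
    ultralimitMean μ 𝒰 (c • f) = c * ultralimitMean μ 𝒰 f :=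
  ((tendsto_ultralimitMean hf).const_mul c).congr
    (fun _ => (integral_smul c f).symm) |>.limUnder_eq

theorem ultralimitMean_nonneg (hf : ∃ C, ∀ x, |f x| ≤ C) (hf₀ : ∀ x, 0 ≤ f x) :
    0 ≤ ultralimitMean μ 𝒰 f :=
  ge_of_tendsto' (tendsto_ultralimitMean hf) fun _ => integral_nonneg hf₀

theorem ultralimitMean_one : ultralimitMean μ 𝒰 (fun _ => 1) = 1 := by
  simpa [ultralimitMean] using
    (tendsto_const_nhds (x := (1 : ℝ)) (f := (𝒰 : Filter I))).limUnder_eq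

theorem ultralimitMean_eq_of_tendsto_sub (hf : ∃ C, ∀ x, |f x| ≤ C)
    (h : Tendsto (fun i => (∫ x, f x ∂μ i) - ∫ x, f' x ∂μ i) 𝒰 (𝓝 0)) :
    ultralimitMean μ 𝒰 f' = ultralimitMean μ 𝒰 f := by
  simpa [ultralimitMean] using
    ((tendsto_ultralimitMean (μ := μ) (𝒰 := 𝒰) hf).sub h).limUnder_eq

end UltralimitMean

/-- If a net of Borel probability measures on `G` converges to invariance in the UEB
topology, then `G` is amenable. -/
theorem amenable_of_net_converging_to_invariance
    {G : Type*} [Group G] [TopologicalSpace G] [IsTopologicalGroup G]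
    [MeasurableSpace G] [BorelSpace G]
    {I : Type*} [Preorder I] [IsDirected I (· ≤ ·)] [Nonempty I]
    (μ : I → Measure G) [∀ i, IsProbabilityMeasure (μ i)]
    (hinv : ∀ H : Set (G → ℝ), IsRUEB G H → ∀ g : G,
      Tendsto (fun i => ⨆ f ∈ H, |(∫ x, f x ∂μ i) - ∫ x, f (g * x) ∂μ i|)
        atTop (𝓝 0)) :
    HasLeftInvariantMean G := by
  let 𝒰 := Ultrafilter.of (atTop : Filter I)
  refine ⟨ultralimitMean μ 𝒰, fun f hf f' hf' => ultralimitMean_add hf hf',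
    fun f hf => ultralimitMean_smul hf.1, fun f hf => ultralimitMean_nonneg hf.1,
    ultralimitMean_one, fun f hf g => ultralimitMean_eq_of_tendsto_sub hf.1 ?_⟩
  have h := hinv {f} (isRUEB_singleton hf) g
  simp only [Real.iSup_mem_singleton, abs_nonneg] at h
  exact (tendsto_zero_iff_abs_tendsto_zero _).2 (h.mono_left (Ultrafilter.of_le _))
end

section
/- Let G be a topological group, let λ denote Lebesgue measure on [0,1], and let f : [0,1] → G be strongly λ-measurable. Let U be a neighborhood of the identity of G and ε > 0. Then there exist a finite subset E ⊆ G with e ∈ E and a natural number m such that for every n ≥ m there is a tuple g ∈ E^n with λ({ x ∈ [0,1) : f(x)·(h_n(g)(x))⁻¹ ∉ U }) < ε, where h_n(g) : [0,1) → G is the step function with h_n(g)(x) = g_i for x ∈ [(i−1)/n, i/n), i ∈ {1,…,n}. -/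
/-!
Strong measurability makes `f` continuous on a closed, hence compact, `A ⊆ [0,1]` of co-measure
at most `ε / 2`. Cover `A` by finitely many balls around points `a` on which
`f x * (f a)⁻¹ ∈ U`; a Lebesgue number `r` of this cover lets every piece of `A` of diameter
below `r` be approximated by a single value `f a`. Once `1 / n ≤ r`, each interval
`[i/n, (i+1)/n)` is such a piece, so the step map with these values fails only off `A`.
-/

open MeasureTheory Topology Metric

theorem IsCompact.exists_finset_forall_dist_lt_mul_inv_mem {X G : Type*} [PseudoMetricSpace X]
    [Group G] [TopologicalSpace G] [ContinuousMul G] {A : Set X} (hA : IsCompact A) {f : X → G}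
    (hf : ContinuousOn f A) {U : Set G} (hU : U ∈ 𝓝 1) :
    ∃ S : Finset G, ∃ r > 0, ∀ y ∈ A, ∃ s ∈ S, ∀ x ∈ A, dist x y < r → f x * s⁻¹ ∈ U := by
  classical
  have hloc : ∀ a ∈ A, ∃ δ > 0, ball a δ ∩ A ⊆ (fun x => f x * (f a)⁻¹) ⁻¹' U := fun a ha =>
    mem_nhdsWithin_iff.1 <| ((hf a ha).mul continuousWithinAt_const) (by simpa using hU)
  choose! δ hδ0 hδ using hloc
  obtain ⟨t, htA, hcover⟩ :=
    hA.elim_nhds_subcover (fun a => ball a (δ a)) fun a ha => ball_mem_nhds a (hδ0 a ha)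
  obtain ⟨r, hr, hleb⟩ := lebesgue_number_lemma_of_metric (c := fun a : t => ball (a : X) (δ a))
    hA (fun _ => isOpen_ball) (by simpa [Set.iUnion_subtype] using hcover)
  refine ⟨t.image f, r, hr, fun y hy => ?_⟩
  obtain ⟨a, hya⟩ := hleb y hy
  exact ⟨f a, Finset.mem_image_of_mem f a.2, fun x hx hxy => hδ a (htA a a.2) ⟨hya hxy, hx⟩⟩

theorem dist_lt_inv_of_floor_mul_eq_floor_mul {x y c : ℝ} (hx : 0 ≤ x) (hy : 0 ≤ y) (hc : 0 < c)
    (h : ⌊x * c⌋₊ = ⌊y * c⌋₊) : dist x y < c⁻¹ := by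
  have hxy : |x * c - y * c| < 1 := Int.abs_sub_lt_one_of_floor_eq_floor <| by
    rw [← Int.natCast_floor_eq_floor (by positivity), ← Int.natCast_floor_eq_floor (by positivity),
      h]
  rw [← sub_mul, abs_mul, abs_of_pos hc] at hxy
  rwa [Real.dist_eq, ← one_div, lt_div_iff₀ hc]

theorem exists_step_map_of_forall_dist_lt {β : Type*} [DecidableEq β] {p : ℝ → β → Prop}
    {A : Set ℝ} {S : Finset β} {r : ℝ} (hS : ∀ y ∈ A, ∃ s ∈ S, ∀ x ∈ A, dist x y < r → p x s)
    (d : β) {c : ℝ} (hc : 0 < c) (hcr : c⁻¹ ≤ r) :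
    ∃ g : ℕ → β, (∀ i, g i ∈ insert d S) ∧ ∀ x ∈ A, 0 ≤ x → p x (g ⌊x * c⌋₊) := by
  classical
  have : Nonempty β := ⟨d⟩
  choose! s hsS hs using hS
  refine ⟨fun i => if h : ∃ y ∈ A, 0 ≤ y ∧ ⌊y * c⌋₊ = i then s h.choose else d, fun i => ?_,
    fun x hx hx0 => ?_⟩
  · dsimp only
    split_ifs with h
    exacts [Finset.mem_insert_of_mem (hsS _ h.choose_spec.1), Finset.mem_insert_self _ _]
  · have h : ∃ y ∈ A, 0 ≤ y ∧ ⌊y * c⌋₊ = ⌊x * c⌋₊ := ⟨x, hx, hx0, rfl⟩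
    obtain ⟨hyA, hy0, hyx⟩ := h.choose_spec
    dsimp only
    rw [dif_pos h]
    exact hs _ hyA x hx
      ((dist_lt_inv_of_floor_mul_eq_floor_mul hx0 hy0 hc hyx.symm).trans_le hcr)

/-- Approximation of a strongly measurable map `f : [0,1] → G` by step functions with
values in a fixed finite set: given a neighborhood `U` of the identity and `ε > 0`,
there are a finite set `E ∋ 1` and `m` such that for every `n ≥ m` some step function
`h_n(g)` with `n` steps and values `g i ∈ E` satisfies
`λ({x ∈ [0,1) : f(x)·(h_n(g)(x))⁻¹ ∉ U}) < ε`.  Here the step function is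
`x ↦ g ⌊x·n⌋`, i.e. it takes the value `g i` on `[i/n, (i+1)/n)`. -/
theorem strongly_measurable_approx_by_step_maps
    {G : Type*} [Group G] [TopologicalSpace G] [IsTopologicalGroup G]
    (f : ℝ → G)
    (hf : ∀ ε : ℝ, 0 < ε → ∃ A : Set ℝ, A ⊆ Set.Icc 0 1 ∧ IsClosed A ∧
      volume (Set.Icc (0 : ℝ) 1 \ A) ≤ ENNReal.ofReal ε ∧ ContinuousOn f A)
    (U : Set G) (hU : U ∈ 𝓝 (1 : G)) (ε : ℝ) (hε : 0 < ε) :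
    ∃ E : Finset G, (1 : G) ∈ E ∧ ∃ m : ℕ, ∀ n : ℕ, m ≤ n →
      ∃ g : ℕ → G, (∀ i < n, g i ∈ E) ∧
        volume {x ∈ Set.Ico (0 : ℝ) 1 | f x * (g ⌊x * n⌋₊)⁻¹ ∉ U} <
          ENNReal.ofReal ε := by
  classical
  obtain ⟨A, hA01, hAc, hAvol, hfA⟩ := hf (ε / 2) (half_pos hε)
  obtain ⟨S, r, hr, hS⟩ :=
    (isCompact_Icc.of_isClosed_subset hAc hA01).exists_finset_forall_dist_lt_mul_inv_mem hfA hU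
  obtain ⟨m, hm⟩ := exists_nat_gt r⁻¹
  refine ⟨insert 1 S, Finset.mem_insert_self _ _, m, fun n hn => ?_⟩
  have hmn : (m : ℝ) ≤ n := by exact_mod_cast hn
  obtain ⟨g, hgE, hgU⟩ := exists_step_map_of_forall_dist_lt hS 1
    (((inv_pos.2 hr).trans hm).trans_le hmn) (inv_le_of_inv_le₀ hr (hm.le.trans hmn))
  refine ⟨g, fun i _ => hgE i, ?_⟩
  calc volume {x ∈ Set.Ico (0 : ℝ) 1 | f x * (g ⌊x * n⌋₊)⁻¹ ∉ U}
      ≤ volume (Set.Icc (0 : ℝ) 1 \ A) := measure_mono fun x ⟨hx01, hxU⟩ =>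
        ⟨Set.Ico_subset_Icc_self hx01, fun hxA => hxU (hgU x hxA hx01.1)⟩
    _ ≤ ENNReal.ofReal (ε / 2) := hAvol
    _ < ENNReal.ofReal ε := (ENNReal.ofReal_lt_ofReal_iff hε).2 (half_lt_self hε)
end
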